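/- arXiv:1410.0036 — 9 statements merged into one kernel-verified Lean document; each statement's English description precedes it below -/
import Mathlib

section
/- Let a ∈ (0,1) and let Z be a nonnegative random variable with E[exp(-λZ)] = exp(-λ^a) for all λ ≥ 0. Then for every real s < a one has E[Z^s] < ∞ and E[Z^s] = Γ(1 - s/a) / Γ(1 - s). -/
open MeasureTheory ProbabilityTheory
open scoped MeasureTheory

/-!
For `z > 0` and a suitable `φ`, scaling gives `∫₀^∞ λ^(-s-1) φ(λz) dλ = M_φ(-s) z^s`, where
`M_φ(r) = ∫₀^∞ y^(r-1) φ(y) dy`. Take `φ(x) = e^(-x)` if `s < 0` and `φ(x) = 1 - e^(-x)` if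
`0 < s < 1`; in both cases the Laplace law says `E[φ(λZ)] = φ(λ^a)`. Integrating over `λ` and
swapping the integrals (Tonelli) gives `M_φ(-s) E[Z^s] = ∫₀^∞ λ^(-s-1) φ(λ^a) dλ = M_φ(-s/a) / a`.
Both Mellin transforms are Gamma values: `M_φ(r) = Γ(r)` for `φ = e^(-x)`, and integration by parts
gives `M_φ(-s) = Γ(1-s)/s` for `φ = 1 - e^(-x)`. The scaling step needs `Z > 0` a.s., which holds
since `P(Z = 0) ≤ E[e^(-λZ)] = e^(-λ^a) → 0`.
-/

open Real Set Filter Topology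

/-- The Mellin transform `mellin` of Mathlib, for real-valued functions and real exponents. -/
noncomputable def realMellin (φ : ℝ → ℝ) (r : ℝ) : ℝ :=
  ∫ y in Ioi 0, y ^ (r - 1) * φ y

theorem realMellin_comp_mul_right (φ : ℝ → ℝ) (r : ℝ) {c : ℝ} (hc : 0 < c) :
    realMellin (fun y => φ (y * c)) r = c ^ (-r) * realMellin φ r := by
  have h : ∀ y ∈ Ioi (0 : ℝ), y ^ (r - 1) * φ (y * c)
      = c ^ (1 - r) * ((y * c) ^ (r - 1) * φ (y * c)) := fun y hy => by
    rw [mul_rpow (le_of_lt hy) hc.le, ← mul_assoc, mul_comm (c ^ (1 - r)), mul_assoc (y ^ _),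
      ← rpow_add hc]
    simp
  rw [realMellin, setIntegral_congr_fun measurableSet_Ioi h, integral_const_mul,
    integral_comp_mul_right_Ioi (fun y => y ^ (r - 1) * φ y) 0 hc, zero_mul, smul_eq_mul,
    realMellin, ← mul_assoc, ← rpow_neg_one, ← rpow_add hc]
  ring_nf

theorem realMellin_comp_rpow (φ : ℝ → ℝ) (r : ℝ) {p : ℝ} (hp : 0 < p) :
    realMellin (fun y => φ (y ^ p)) r = p⁻¹ * realMellin φ (r / p) := by
  rw [realMellin, realMellin,
    ← integral_comp_rpow_Ioi_of_pos (g := fun y => y ^ (r / p - 1) * φ y) hp, ← integral_const_mul]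
  refine setIntegral_congr_fun measurableSet_Ioi fun y hy => ?_
  have hy : 0 < y := hy
  rw [smul_eq_mul, ← rpow_mul hy.le, ← mul_assoc, ← mul_assoc, inv_mul_cancel_left₀ hp.ne',
    ← rpow_add hy]
  congr 2
  field_simp
  ring

theorem realMellin_exp_neg {r : ℝ} (hr : 0 < r) :
    realMellin (fun y => exp (-y)) r = Gamma r := by
  rw [Gamma_eq_integral hr, realMellin]
  simp_rw [mul_comm]

theorem one_sub_exp_neg_nonneg {y : ℝ} (hy : 0 ≤ y) : 0 ≤ 1 - exp (-y) := by
  linarith [exp_le_one_iff.mpr (neg_nonpos.mpr hy)]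

theorem one_sub_exp_neg_le_self (y : ℝ) : 1 - exp (-y) ≤ y := by
  linarith [add_one_le_exp (-y)]

theorem one_sub_exp_neg_le_one (y : ℝ) : 1 - exp (-y) ≤ 1 := by
  linarith [exp_pos (-y)]

theorem integrableOn_rpow_mul_one_sub_exp_neg {s : ℝ} (hs0 : 0 < s) (hs1 : s < 1) :
    IntegrableOn (fun y => y ^ (-s - 1) * (1 - exp (-y))) (Ioi 0) := by
  have hmeas : ∀ t : Set ℝ, AEStronglyMeasurable (fun y => y ^ (-s - 1) * (1 - exp (-y)))
      (volume.restrict t) := fun t => by fun_prop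
  rw [← Ioc_union_Ioi_eq_Ioi zero_le_one, integrableOn_union]
  constructor
  · have hdom : IntegrableOn (fun y : ℝ => y ^ (-s)) (Ioc 0 1) :=
      (intervalIntegrable_iff_integrableOn_Ioc_of_le zero_le_one).mp
        (intervalIntegral.intervalIntegrable_rpow' (by linarith))
    refine hdom.mono' (hmeas _) ?_
    filter_upwards [ae_restrict_mem measurableSet_Ioc] with y hy
    have hy0 : 0 < y := hy.1
    rw [norm_of_nonneg (mul_nonneg (by positivity) (one_sub_exp_neg_nonneg hy0.le))]
    calc y ^ (-s - 1) * (1 - exp (-y)) ≤ y ^ (-s - 1) * y :=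
          mul_le_mul_of_nonneg_left (one_sub_exp_neg_le_self y) (by positivity)
      _ = y ^ (-s) := by rw [← rpow_add_one hy0.ne']; ring_nf
  · refine (integrableOn_Ioi_rpow_of_lt (a := -s - 1) (by linarith) one_pos).mono' (hmeas _) ?_
    filter_upwards [ae_restrict_mem measurableSet_Ioi] with y (hy : 1 < y)
    rw [norm_of_nonneg (mul_nonneg (by positivity) (one_sub_exp_neg_nonneg (by linarith)))]
    exact mul_le_of_le_one_right (by positivity) (one_sub_exp_neg_le_one y)

theorem tendsto_one_sub_exp_neg_mul_rpow_nhdsGT_zero {s : ℝ} (hs : s < 1) :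
    Tendsto (fun y => (1 - exp (-y)) * y ^ (-s)) (𝓝[>] 0) (𝓝 0) := by
  have hlim : Tendsto (fun y : ℝ => y ^ (1 - s)) (𝓝 0) (𝓝 (0 ^ (1 - s))) :=
    (continuousAt_rpow_const 0 (1 - s) (Or.inr (by linarith))).tendsto
  rw [zero_rpow (by linarith)] at hlim
  refine squeeze_zero' ?_ ?_ (hlim.mono_left nhdsWithin_le_nhds)
  all_goals filter_upwards [self_mem_nhdsWithin] with y (hy : 0 < y)
  · exact mul_nonneg (one_sub_exp_neg_nonneg hy.le) (rpow_nonneg hy.le _)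
  · rw [show 1 - s = 1 + -s by ring, rpow_add hy, rpow_one]
    gcongr
    exact one_sub_exp_neg_le_self y

theorem tendsto_one_sub_exp_neg_mul_rpow_atTop {s : ℝ} (hs : 0 < s) :
    Tendsto (fun y => (1 - exp (-y)) * y ^ (-s)) atTop (𝓝 0) := by
  refine squeeze_zero' ?_ ?_ (tendsto_rpow_neg_atTop hs)
  all_goals filter_upwards [eventually_gt_atTop 0] with y hy
  · exact mul_nonneg (one_sub_exp_neg_nonneg hy.le) (rpow_nonneg hy.le _)
  · exact mul_le_of_le_one_left (rpow_nonneg hy.le _) (one_sub_exp_neg_le_one y)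

theorem realMellin_one_sub_exp_neg {s : ℝ} (hs0 : 0 < s) (hs1 : s < 1) :
    realMellin (fun y => 1 - exp (-y)) (-s) = Gamma (1 - s) / s := by
  set u : ℝ → ℝ := fun y => 1 - exp (-y)
  set v : ℝ → ℝ := fun y => -(y ^ (-s) / s)
  have hu : ∀ y ∈ Ioi (0 : ℝ), HasDerivAt u (exp (-y)) y := fun y _ => by
    simpa using ((hasDerivAt_neg y).exp).const_sub 1
  have hv : ∀ y ∈ Ioi (0 : ℝ), HasDerivAt v (y ^ (-s - 1)) y := fun y hy => by
    refine ((hasDerivAt_rpow_const (p := -s) (Or.inl hy.ne')).div_const s).fun_neg.congr_deriv ?_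
    field_simp
  have huv : u * v = fun y => -((1 - exp (-y)) * y ^ (-s) / s) := by
    ext y
    simp only [Pi.mul_apply, u, v]
    ring
  have h_zero : Tendsto (u * v) (𝓝[>] 0) (𝓝 0) := by
    simpa [huv] using ((tendsto_one_sub_exp_neg_mul_rpow_nhdsGT_zero hs1).div_const s).neg
  have h_infty : Tendsto (u * v) atTop (𝓝 0) := by
    simpa [huv] using ((tendsto_one_sub_exp_neg_mul_rpow_atTop hs0).div_const s).neg
  have hGamma : ∫ y in Ioi 0, exp (-y) * v y = -(Gamma (1 - s) / s) := by
    rw [Gamma_eq_integral (by linarith), ← integral_div, ← integral_neg]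
    refine setIntegral_congr_fun measurableSet_Ioi fun y _ => ?_
    simp only [v, sub_sub_cancel_left]
    ring
  have hu'v : IntegrableOn (fun y => exp (-y) * v y) (Ioi 0) :=
    .of_integral_ne_zero <| by
      rw [hGamma]; exact neg_ne_zero.mpr (div_pos (Gamma_pos_of_pos (by linarith)) hs0).ne'
  have hparts := integral_Ioi_mul_deriv_eq_deriv_mul hu hv
    ((integrableOn_rpow_mul_one_sub_exp_neg hs0 hs1).congr_fun (fun y _ => mul_comm _ _)
      measurableSet_Ioi) hu'v h_zero h_infty
  rw [hGamma, sub_zero, zero_sub, neg_neg] at hparts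
  rw [realMellin, ← hparts]
  exact integral_congr_ae (Eventually.of_forall fun y => mul_comm _ _)

section

variable {α β : Type*} [MeasurableSpace α] [MeasurableSpace β] {μ : Measure α} {ν : Measure β}

theorem integrable_prod_of_nonneg [SFinite μ] [SFinite ν] {f : α × β → ℝ}
    (hf : AEStronglyMeasurable f (μ.prod ν)) (hf0 : ∀ᵐ y ∂ν, ∀ᵐ x ∂μ, 0 ≤ f (x, y))
    (hf_int : ∀ᵐ y ∂ν, Integrable (fun x => f (x, y)) μ)
    (h_integral : Integrable (fun y => ∫ x, f (x, y) ∂μ) ν) :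
    Integrable f (μ.prod ν) := by
  refine (integrable_prod_iff' hf).2 ⟨hf_int, h_integral.congr ?_⟩
  filter_upwards [hf0] with y hy
  exact integral_congr_ae (by filter_upwards [hy] with x hx using (norm_of_nonneg hx).symm)

end

section

variable {Ω : Type*} [MeasurableSpace Ω] {μ : Measure Ω} {X : Ω → ℝ} {a s : ℝ}

theorem integrable_exp_neg_mul [IsFiniteMeasure μ] (hX : Measurable X) (hX0 : 0 ≤ᵐ[μ] X)
    {l : ℝ} (hl : 0 ≤ l) : Integrable (fun ω => exp (-(l * X ω))) μ := by
  refine .of_bound (by fun_prop) 1 ?_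
  filter_upwards [hX0] with ω hω
  rw [norm_of_nonneg (exp_pos _).le, exp_le_one_iff, neg_nonpos]
  exact mul_nonneg hl hω

theorem ae_pos_of_tendsto_integral_exp_neg_mul [IsFiniteMeasure μ] (hX : Measurable X)
    (hX0 : ∀ ω, 0 ≤ X ω)
    (h : Tendsto (fun l => ∫ ω, exp (-(l * X ω)) ∂μ) atTop (𝓝 0)) : ∀ᵐ ω ∂μ, 0 < X ω := by
  have hS : MeasurableSet {ω | X ω = 0} := hX (measurableSet_singleton 0)
  have hbound : ∀ l, 0 ≤ l → μ.real {ω | X ω = 0} ≤ ∫ ω, exp (-(l * X ω)) ∂μ := fun l hl => by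
    calc μ.real {ω | X ω = 0} = ∫ ω in {ω | X ω = 0}, exp (-(l * X ω)) ∂μ := by
          rw [setIntegral_congr_fun hS (g := fun _ => 1) fun ω (hω : X ω = 0) => by simp [hω],
            setIntegral_const, smul_eq_mul, mul_one]
      _ ≤ ∫ ω, exp (-(l * X ω)) ∂μ :=
          setIntegral_le_integral (integrable_exp_neg_mul hX (.of_forall hX0) hl)
            (Eventually.of_forall fun ω => (exp_pos _).le)
  have hnull : μ {ω | X ω = 0} = 0 := by
    rw [← measureReal_eq_zero_iff]
    exact le_antisymm (ge_of_tendsto h (eventually_ge_atTop 0 |>.mono hbound)) measureReal_nonneg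
  refine measure_mono_null (fun ω hω => ?_) hnull
  exact le_antisymm (not_lt.mp hω) (hX0 ω)

theorem integral_rpow_eq_of_integral_comp_mul [SFinite μ] (hX : Measurable X)
    (hX_pos : ∀ᵐ ω ∂μ, 0 < X ω) {φ : ℝ → ℝ} (hφ : Measurable φ) (hφ0 : ∀ x, 0 < x → 0 ≤ φ x)
    (ha : 0 < a) (hφX : ∀ l, 0 < l → Integrable (fun ω => φ (l * X ω)) μ)
    (hlaw : ∀ l, 0 < l → ∫ ω, φ (l * X ω) ∂μ = φ (l ^ a))
    (hM : realMellin φ (-s) ≠ 0) (hMa : realMellin φ (-s / a) ≠ 0) :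
    Integrable (fun ω => X ω ^ s) μ ∧
      ∫ ω, X ω ^ s ∂μ = realMellin φ (-s / a) / (a * realMellin φ (-s)) := by
  set F : Ω → ℝ → ℝ := fun ω l => l ^ (-s - 1) * φ (l * X ω)
  have h_inner : ∀ᵐ ω ∂μ, ∫ l in Ioi 0, F ω l = realMellin φ (-s) * X ω ^ s := by
    filter_upwards [hX_pos] with ω hω
    calc ∫ l in Ioi 0, F ω l = realMellin (fun y => φ (y * X ω)) (-s) := rfl
      _ = realMellin φ (-s) * X ω ^ s := by
        rw [realMellin_comp_mul_right φ _ hω, neg_neg, mul_comm]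
  have h_outer : ∀ l ∈ Ioi (0 : ℝ), ∫ ω, F ω l ∂μ = l ^ (-s - 1) * φ (l ^ a) := fun l hl => by
    rw [← hlaw l hl, ← integral_const_mul]
  have h_outer_integral : ∫ l in Ioi 0, ∫ ω, F ω l ∂μ = a⁻¹ * realMellin φ (-s / a) := by
    rw [setIntegral_congr_fun measurableSet_Ioi h_outer, ← realMellin_comp_rpow φ _ ha]
    rfl
  have hF : Integrable (Function.uncurry F) (μ.prod (volume.restrict (Ioi 0))) := by
    refine integrable_prod_of_nonneg (by fun_prop) ?_ ?_ ?_
    · filter_upwards [ae_restrict_mem measurableSet_Ioi] with l (hl : 0 < l)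
      filter_upwards [hX_pos] with ω hω
      exact mul_nonneg (rpow_nonneg hl.le _) (hφ0 _ (mul_pos hl hω))
    · filter_upwards [ae_restrict_mem measurableSet_Ioi] with l hl
      exact (hφX l hl).const_mul (l ^ (-s - 1))
    · refine .of_integral_ne_zero ?_
      change ∫ l in Ioi 0, ∫ ω, F ω l ∂μ ≠ 0
      rw [h_outer_integral]
      exact mul_ne_zero (inv_ne_zero ha.ne') hMa
  have h_int : Integrable (fun ω => realMellin φ (-s) * X ω ^ s) μ :=
    hF.integral_prod_left.congr h_inner
  refine ⟨(h_int.const_mul (realMellin φ (-s))⁻¹).congr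
    (Eventually.of_forall fun ω => inv_mul_cancel_left₀ hM _), ?_⟩
  rw [eq_div_iff (mul_ne_zero ha.ne' hM), mul_comm, mul_assoc, ← integral_const_mul,
    ← integral_congr_ae h_inner, integral_integral_swap hF, h_outer_integral,
    mul_inv_cancel_left₀ ha.ne']

variable [IsProbabilityMeasure μ]

theorem integral_rpow_of_laplace_of_neg (hX : Measurable X) (hX_pos : ∀ᵐ ω ∂μ, 0 < X ω)
    (ha : 0 < a) (hlaw : ∀ l, 0 ≤ l → ∫ ω, exp (-(l * X ω)) ∂μ = exp (-(l ^ a))) (hs : s < 0) :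
    Integrable (fun ω => X ω ^ s) μ ∧
      ∫ ω, X ω ^ s ∂μ = Gamma (1 - s / a) / Gamma (1 - s) := by
  have hsa : 0 < -s / a := div_pos (neg_pos.mpr hs) ha
  obtain ⟨h_int, h_eq⟩ := integral_rpow_eq_of_integral_comp_mul hX hX_pos
    (φ := fun x => exp (-x)) (by fun_prop) (fun x _ => (exp_pos _).le) ha
    (fun l hl => integrable_exp_neg_mul hX (hX_pos.mono fun _ h => h.le) hl.le)
    (fun l hl => hlaw l hl.le)
    (by rw [realMellin_exp_neg (neg_pos.mpr hs)]; exact (Gamma_pos_of_pos (neg_pos.mpr hs)).ne')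
    (by rw [realMellin_exp_neg hsa]; exact (Gamma_pos_of_pos hsa).ne')
  refine ⟨h_int, ?_⟩
  rw [h_eq, realMellin_exp_neg hsa, realMellin_exp_neg (neg_pos.mpr hs),
    show 1 - s / a = -s / a + 1 by ring, show 1 - s = -s + 1 by ring,
    Gamma_add_one hsa.ne', Gamma_add_one (neg_pos.mpr hs).ne']
  have := (Gamma_pos_of_pos (neg_pos.mpr hs)).ne'
  have := hs.ne
  field_simp

theorem integral_rpow_of_laplace_of_pos (hX : Measurable X) (hX_pos : ∀ᵐ ω ∂μ, 0 < X ω)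
    (ha : 0 < a) (ha1 : a < 1) (hlaw : ∀ l, 0 ≤ l → ∫ ω, exp (-(l * X ω)) ∂μ = exp (-(l ^ a)))
    (hs0 : 0 < s) (hs : s < a) :
    Integrable (fun ω => X ω ^ s) μ ∧
      ∫ ω, X ω ^ s ∂μ = Gamma (1 - s / a) / Gamma (1 - s) := by
  have hexp : ∀ l, 0 ≤ l → Integrable (fun ω => exp (-(l * X ω))) μ :=
    fun l hl => integrable_exp_neg_mul hX (hX_pos.mono fun _ h => h.le) hl
  have hs1 : s < 1 := hs.trans ha1
  have hsa0 : 0 < s / a := div_pos hs0 ha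
  have hsa1 : s / a < 1 := (div_lt_one ha).mpr hs
  have hM := realMellin_one_sub_exp_neg hs0 hs1
  have hMa : realMellin (fun y => 1 - exp (-y)) (-s / a) = Gamma (1 - s / a) / (s / a) := by
    rw [neg_div, realMellin_one_sub_exp_neg hsa0 hsa1]
  have hΓ := Gamma_pos_of_pos (sub_pos.mpr hs1)
  obtain ⟨h_int, h_eq⟩ := integral_rpow_eq_of_integral_comp_mul hX hX_pos
    (φ := fun x => 1 - exp (-x)) (by fun_prop) (fun x hx => one_sub_exp_neg_nonneg hx.le) ha
    (fun l hl => (integrable_const 1).sub (hexp l hl.le))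
    (fun l hl => by simp [integral_sub (integrable_const 1) (hexp l hl.le), hlaw l hl.le])
    (by rw [hM]; exact (div_pos hΓ hs0).ne')
    (by rw [hMa]; exact (div_pos (Gamma_pos_of_pos (sub_pos.mpr hsa1)) hsa0).ne')
  refine ⟨h_int, ?_⟩
  rw [h_eq, hM, hMa]
  field_simp

end

/-- Fractional moments of a positive `a`-stable random variable:
if `E[exp(-λZ)] = exp(-λ^a)` then `E[Z^s] = Γ(1-s/a)/Γ(1-s)` for `s < a`. -/
theorem stable_fractional_moments
    {Ω : Type*} [MeasureSpace Ω] [IsProbabilityMeasure (ℙ : Measure Ω)]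
    {a : ℝ} (ha0 : 0 < a) (ha1 : a < 1)
    (Z : Ω → ℝ) (hZmeas : Measurable Z) (hZnn : ∀ ω, 0 ≤ Z ω)
    (hZlaw : ∀ l : ℝ, 0 ≤ l →
      (∫ ω, Real.exp (-(l * Z ω)) ∂ℙ) = Real.exp (-(l ^ a)))
    (s : ℝ) (hs : s < a) :
    Integrable (fun ω => Z ω ^ s) ℙ ∧
    ∫ ω, Z ω ^ s ∂ℙ = Real.Gamma (1 - s/a) / Real.Gamma (1 - s) := by
  have hZpos : ∀ᵐ ω, 0 < Z ω := by
    have h_decay : Tendsto (fun l => exp (-(l ^ a))) atTop (𝓝 0) :=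
      tendsto_exp_atBot.comp (tendsto_neg_atTop_atBot.comp (tendsto_rpow_atTop ha0))
    refine ae_pos_of_tendsto_integral_exp_neg_mul hZmeas hZnn (h_decay.congr' ?_)
    filter_upwards [eventually_ge_atTop 0] with l hl using (hZlaw l hl).symm
  rcases lt_trichotomy s 0 with hs0 | rfl | hs0
  · exact integral_rpow_of_laplace_of_neg hZmeas hZpos ha0 hZlaw hs0
  · simp
  · exact integral_rpow_of_laplace_of_pos hZmeas hZpos ha0 ha1 hZlaw hs0 hs
end

section
/- Let α ∈ (1,2) and u > 0. Then u · M_α(-(u+1)) / M_α(-u) = Γ(α + (α+1)u) / Γ((α+1)u). Equivalently, u · (α+1)^{-1} · Γ(1+(α+1)(u+1)) · Γ(α/(α+1)+u) · Γ(1+u) / ( Γ(1+(α+1)u) · Γ(α/(α+1)+u+1) · Γ(2+u) ) = Γ(α+(α+1)u) / Γ((α+1)u). (This shows that the Laplace exponent Ψ_α of the background Lévy process of the perpetuity representation of 𝒜_α satisfies Ψ_α(u) = Φ_α((α+1)u) with Φ_α(s) = Γ(α+s)/Γ(s).) -/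
/-- The Mellin transform `M_α(s) = (α+1)^s Γ(α/(α+1)) Γ(1-(α+1)s) / (Γ(α/(α+1)-s) Γ(1-s))`
of the stopped area `𝒜_α`. -/
noncomputable def Mellinα (α s : ℝ) : ℝ :=
  (α+1) ^ s * Real.Gamma (α/(α+1)) * Real.Gamma (1-(α+1)*s) /
    (Real.Gamma (α/(α+1) - s) * Real.Gamma (1-s))

/-- The Laplace exponent `Ψ_α` of the background Lévy process of the perpetuity
representation of `𝒜_α` satisfies `Ψ_α(u) = Φ_α((α+1)u)` with `Φ_α(s) = Γ(α+s)/Γ(s)`. -/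
theorem laplace_exponent_identity
    {α u : ℝ} (hα1 : 1 < α) (hα2 : α < 2) (hu : 0 < u) :
    (u * Mellinα α (-(u+1)) / Mellinα α (-u) =
      Real.Gamma (α + (α+1)*u) / Real.Gamma ((α+1)*u)) ∧
    (u * (α+1)⁻¹ * Real.Gamma (1+(α+1)*(u+1)) * Real.Gamma (α/(α+1)+u) * Real.Gamma (1+u) /
        (Real.Gamma (1+(α+1)*u) * Real.Gamma (α/(α+1)+u+1) * Real.Gamma (2+u)) =
      Real.Gamma (α + (α+1)*u) / Real.Gamma ((α+1)*u)) := by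
  have hβ : (0:ℝ) < α + 1 := by linarith
  have hc : (0:ℝ) < α/(α+1) := by positivity
  have hspos : 0 < (α+1)*u := by positivity
  have g1 : 0 < Real.Gamma (α + (α+1)*u) := Real.Gamma_pos_of_pos (by nlinarith)
  have g2 : 0 < Real.Gamma ((α+1)*u) := Real.Gamma_pos_of_pos hspos
  have g3 : 0 < Real.Gamma (α/(α+1) + u) := Real.Gamma_pos_of_pos (by positivity)
  have g4 : 0 < Real.Gamma (1 + u) := Real.Gamma_pos_of_pos (by linarith)
  have gc : 0 < Real.Gamma (α/(α+1)) := Real.Gamma_pos_of_pos hc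
  have e1 : Real.Gamma (1+(α+1)*(u+1))
      = (α+(α+1)*u+1)*((α+(α+1)*u)*Real.Gamma (α+(α+1)*u)) := by
    rw [show 1+(α+1)*(u+1) = (α+(α+1)*u+1)+1 by ring,
      Real.Gamma_add_one (by nlinarith : α+(α+1)*u+1 ≠ 0),
      show α+(α+1)*u+1 = (α+(α+1)*u)+1 by ring,
      Real.Gamma_add_one (by nlinarith : α+(α+1)*u ≠ 0)]
  have e2 : Real.Gamma (1+(α+1)*u) = (α+1)*u*Real.Gamma ((α+1)*u) := by
    rw [show 1+(α+1)*u = (α+1)*u+1 by ring, Real.Gamma_add_one hspos.ne']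
  have e3 : Real.Gamma (α/(α+1)+u+1) = (α/(α+1)+u)*Real.Gamma (α/(α+1)+u) :=
    Real.Gamma_add_one (by positivity)
  have e4 : Real.Gamma (2+u) = (1+u)*Real.Gamma (1+u) := by
    rw [show 2+u = (1+u)+1 by ring, Real.Gamma_add_one (by linarith : 1+u ≠ 0)]
  have h2 : u * (α+1)⁻¹ * Real.Gamma (1+(α+1)*(u+1)) * Real.Gamma (α/(α+1)+u) *
        Real.Gamma (1+u) /
        (Real.Gamma (1+(α+1)*u) * Real.Gamma (α/(α+1)+u+1) * Real.Gamma (2+u)) =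
      Real.Gamma (α + (α+1)*u) / Real.Gamma ((α+1)*u) := by
    rw [e1, e2, e3, e4]
    have hcu : (0:ℝ) < α/(α+1)+u := by positivity
    have key : α/(α+1)+u = (α+(α+1)*u)/(α+1) := by field_simp
    rw [key]
    have h1u : (0:ℝ) < 1+u := by linarith
    field_simp
    ring
  refine ⟨?_, h2⟩
  rw [← h2]
  simp only [Mellinα]
  rw [show 1-(α+1)*(-(u+1)) = 1+(α+1)*(u+1) by ring,
    show 1-(α+1)*(-u) = 1+(α+1)*u by ring,
    show α/(α+1) - -(u+1) = α/(α+1)+u+1 by ring,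
    show α/(α+1) - -u = α/(α+1)+u by ring,
    show (1:ℝ) - -(u+1) = 2+u by ring,
    show (1:ℝ) - -u = 1+u by ring,
    show -(u+1) = -u + (-1:ℝ) by ring,
    Real.rpow_add hβ, Real.rpow_neg_one]
  have hr : (0:ℝ) < (α+1) ^ (-u : ℝ) := Real.rpow_pos_of_pos hβ _
  have ge1 : 0 < Real.Gamma (1+(α+1)*(u+1)) := by rw [e1]; positivity
  have ge2 : 0 < Real.Gamma (1+(α+1)*u) := by rw [e2]; positivity
  have ge3 : 0 < Real.Gamma (α/(α+1)+u+1) := by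
    rw [e3]; have : (0:ℝ) < α/(α+1)+u := by positivity
    positivity
  have ge4 : 0 < Real.Gamma (2+u) := by
    rw [e4]; have : (0:ℝ) < 1+u := by linarith
    positivity
  field_simp
end

section
/- Let α ∈ (1,2). The function f_α(x) = e^{αx} / ( Γ(-α) · (1-e^x)^{α+1} ) is strictly positive for every x < 0, and ∫_{-∞}^0 min(x², 1) · f_α(x) dx < ∞. (This integrability of x² ∧ 1 against the jump density f_α is what makes Φ_α(s) = Γ(α+s)/Γ(s) the Laplace exponent of a spectrally negative Lévy process.) -/
open Real MeasureTheory Set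

lemma gamma_neg_pos {α : ℝ} (hα1 : 1 < α) (hα2 : α < 2) : 0 < Real.Gamma (-α) := by
  have h1 : (-α : ℝ) ≠ 0 := by intro h; nlinarith [h]
  have h2 : (-α + 1 : ℝ) ≠ 0 := by intro h; nlinarith [h]
  have e1 : Real.Gamma (-α + 1) = (-α) * Real.Gamma (-α) := Real.Gamma_add_one h1
  have e2 : Real.Gamma (-α + 1 + 1) = (-α + 1) * Real.Gamma (-α + 1) := Real.Gamma_add_one h2
  have hpos : 0 < Real.Gamma (-α + 1 + 1) := Real.Gamma_pos_of_pos (by linarith)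
  have e3 : Real.Gamma (-α + 1 + 1) = (α * (α - 1)) * Real.Gamma (-α) := by
    rw [e2, e1]; ring
  have hq : 0 < α * (α - 1) := by nlinarith
  nlinarith [hpos, e3, hq]

/-- The jump density `f_α(x) = e^{αx}/(Γ(-α)(1-e^x)^{α+1})` is strictly positive on
`(-∞,0)` and integrates `x² ∧ 1` there. -/
theorem jump_density_integrability
    {α : ℝ} (hα1 : 1 < α) (hα2 : α < 2) :
    (∀ x : ℝ, x < 0 →
      0 < Real.exp (α*x) / (Real.Gamma (-α) * (1 - Real.exp x) ^ (α+1))) ∧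
    MeasureTheory.IntegrableOn (fun x : ℝ => min (x^2) 1 *
        (Real.exp (α*x) / (Real.Gamma (-α) * (1 - Real.exp x) ^ (α+1))))
      (Set.Iio 0) MeasureTheory.volume := by
  have hG := gamma_neg_pos hα1 hα2
  have hden : ∀ x : ℝ, x < 0 → 0 < 1 - Real.exp x := fun x hx => by
    have := Real.exp_lt_one_iff.mpr hx; linarith
  constructor
  · intro x hx
    exact div_pos (Real.exp_pos _) (mul_pos hG (Real.rpow_pos_of_pos (hden x hx) _))
  · have hne : ∀ x ∈ Iio (0:ℝ),
        Real.Gamma (-α) * (1 - Real.exp x) ^ (α+1) ≠ 0 := fun x hx =>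
      (mul_pos hG (Real.rpow_pos_of_pos (hden x hx) _)).ne'
    have hcont : ContinuousOn (fun x : ℝ => min (x^2) 1 *
        (Real.exp (α*x) / (Real.Gamma (-α) * (1 - Real.exp x) ^ (α+1)))) (Iio 0) := by
      apply ContinuousOn.mul
      · exact ((continuous_pow 2).min continuous_const).continuousOn
      · apply ContinuousOn.div
        · exact (Real.continuous_exp.comp (continuous_const.mul continuous_id)).continuousOn
        · apply ContinuousOn.mul continuousOn_const
          exact (continuousOn_const.sub Real.continuous_exp.continuousOn).rpow_const
            (fun x _ => Or.inr (by linarith))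
        · exact hne
    have hnonneg : ∀ x ∈ Iio (0:ℝ), 0 ≤ min (x^2) 1 *
        (Real.exp (α*x) / (Real.Gamma (-α) * (1 - Real.exp x) ^ (α+1))) := by
      intro x hx
      have := hden x hx
      positivity
    rw [show Iio (0:ℝ) = Iio (-1) ∪ Ico (-1) 0 from
      (Set.Iio_union_Ico_eq_Iio (by norm_num)).symm]
    apply MeasureTheory.IntegrableOn.union
    -- Piece 1 : tail at -∞
    · have hsub : Iio (-1:ℝ) ⊆ Iio 0 := fun x hx => hx.trans (by norm_num : (-1:ℝ) < 0)
      apply MeasureTheory.Integrable.mono'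
        (g := fun x : ℝ => 8 / Real.Gamma (-α) * Real.exp x)
        (((integrableOn_exp_Iic (-1)).mono_set Set.Iio_subset_Iic_self).const_mul _)
        ((hcont.mono hsub).aestronglyMeasurable measurableSet_Iio)
      rw [MeasureTheory.ae_restrict_iff' measurableSet_Iio]
      filter_upwards with x hx
      have hx0 : x < 0 := hsub hx
      have hd := hden x hx0
      rw [Real.norm_of_nonneg (hnonneg x hx0)]
      have hxa : Real.exp (α*x) ≤ Real.exp x := Real.exp_le_exp.mpr (by nlinarith)
      have hhalf : (1/2 : ℝ) ≤ 1 - Real.exp x := by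
        have h1 : Real.exp x ≤ Real.exp (-1) := Real.exp_le_exp.mpr (le_of_lt hx)
        have h2 : Real.exp (-1) ≤ 1/2 := by
          have h21 : (2:ℝ) ≤ Real.exp 1 := by linarith [Real.add_one_le_exp 1]
          rw [Real.exp_neg, show (1/2:ℝ) = (2:ℝ)⁻¹ by norm_num]
          gcongr
        linarith
      have hD : (1/8 : ℝ) ≤ (1 - Real.exp x) ^ (α+1) := by
        calc (1/8 : ℝ) = (1/2 : ℝ) ^ (3:ℝ) := by
              rw [show (3:ℝ) = ((3:ℕ):ℝ) by norm_num, Real.rpow_natCast]; norm_num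
        _ ≤ (1/2 : ℝ) ^ (α+1) :=
              Real.rpow_le_rpow_of_exponent_ge (by norm_num) (by norm_num) (by linarith)
        _ ≤ (1 - Real.exp x) ^ (α+1) :=
              Real.rpow_le_rpow (by norm_num) hhalf (by linarith)
      have hdiv : Real.exp (α*x) / (Real.Gamma (-α) * (1 - Real.exp x) ^ (α+1))
          ≤ Real.exp x / (Real.Gamma (-α) * (1/8)) :=
        div_le_div₀ (Real.exp_pos _).le hxa (by positivity)
          (mul_le_mul_of_nonneg_left hD hG.le)
      calc min (x^2) 1 * (Real.exp (α*x) / (Real.Gamma (-α) * (1 - Real.exp x) ^ (α+1)))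
          ≤ 1 * (Real.exp x / (Real.Gamma (-α) * (1/8))) :=
            mul_le_mul (min_le_right _ _) hdiv (by positivity) zero_le_one
      _ = 8 / Real.Gamma (-α) * Real.exp x := by field_simp
    -- Piece 2 : near 0
    · have hII : IntervalIntegrable (fun x : ℝ => (-x) ^ (1-α)) volume (-1) 0 := by
        have h0 : IntervalIntegrable (fun x : ℝ => x ^ (1-α)) volume 0 1 :=
          intervalIntegral.intervalIntegrable_rpow' (by linarith)
        have := (IntervalIntegrable.iff_comp_neg).mp h0
        simpa using this.symm
      have hint : MeasureTheory.IntegrableOn (fun x : ℝ => (-x) ^ (1-α))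
          (Ioc (-1) (0:ℝ)) volume := by
        rw [← intervalIntegrable_iff_integrableOn_Ioc_of_le (by norm_num : (-1:ℝ) ≤ 0)]
        exact hII
      have hint' : MeasureTheory.IntegrableOn
          (fun x : ℝ => 27 / Real.Gamma (-α) * (-x) ^ (1-α)) (Ico (-1) (0:ℝ)) volume := by
        rw [integrableOn_Ico_iff_integrableOn_Ioo]
        exact (hint.mono_set Set.Ioo_subset_Ioc_self).const_mul _
      have hsub : Ico (-1:ℝ) 0 ⊆ Iio 0 := fun x hx => hx.2
      apply MeasureTheory.Integrable.mono' hint'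
        ((hcont.mono hsub).aestronglyMeasurable measurableSet_Ico)
      rw [MeasureTheory.ae_restrict_iff' measurableSet_Ico]
      filter_upwards with x hx
      have hx0 : x < 0 := hx.2
      have hx1 : -1 ≤ x := hx.1
      have hd := hden x hx0
      rw [Real.norm_of_nonneg (hnonneg x hx0)]
      have hxpos : 0 < -x := by linarith
      have hkey : -x / 3 ≤ 1 - Real.exp x := by
        have h1 : 1 + (-x) ≤ Real.exp (-x) := by linarith [Real.add_one_le_exp (-x)]
        have h2 : Real.exp x * Real.exp (-x) = 1 := by
          rw [← Real.exp_add]; simp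
        have h3 : Real.exp x * (1 + (-x)) ≤ 1 := by
          calc Real.exp x * (1 + (-x)) ≤ Real.exp x * Real.exp (-x) :=
                mul_le_mul_of_nonneg_left h1 (Real.exp_pos x).le
          _ = 1 := h2
        have h4 : -x * Real.exp x ≤ 1 - Real.exp x := by nlinarith
        have h5 : (1:ℝ)/3 ≤ Real.exp x := by
          have : Real.exp x ≥ Real.exp (-1) := Real.exp_le_exp.mpr hx1
          have he : (1/3 : ℝ) ≤ Real.exp (-1) := by
            have h3 : Real.exp 1 ≤ 3 :=
              le_of_lt (lt_of_lt_of_le Real.exp_one_lt_d9 (by norm_num))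
            rw [Real.exp_neg, show (1/3:ℝ) = (3:ℝ)⁻¹ by norm_num]
            gcongr
          linarith
        nlinarith
      have hD : (-x/3) ^ (α+1) ≤ (1 - Real.exp x) ^ (α+1) :=
        Real.rpow_le_rpow (by positivity) hkey (by linarith)
      have hxa : Real.exp (α*x) ≤ 1 := Real.exp_le_one_iff.mpr (by nlinarith)
      have h27 : (3:ℝ) ^ (α+1) ≤ 27 := by
        calc (3:ℝ) ^ (α+1) ≤ (3:ℝ) ^ (3:ℝ) :=
              Real.rpow_le_rpow_of_exponent_le (by norm_num) (by linarith)
        _ = 27 := by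
              rw [show (3:ℝ) = ((3:ℕ):ℝ) by norm_num, Real.rpow_natCast]; norm_num
      have hD2 : (-x) ^ (α+1) / 27 ≤ (1 - Real.exp x) ^ (α+1) := by
        refine le_trans ?_ hD
        rw [show (-x/3 : ℝ) = (-x)/3 by ring, Real.div_rpow hxpos.le (by norm_num)]
        gcongr
      have hdiv : Real.exp (α*x) / (Real.Gamma (-α) * (1 - Real.exp x) ^ (α+1))
          ≤ 1 / (Real.Gamma (-α) * ((-x) ^ (α+1) / 27)) :=
        div_le_div₀ zero_le_one hxa (by positivity)
          (mul_le_mul_of_nonneg_left hD2 hG.le)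
      have hxsq : x^2 = (-x) ^ (2:ℝ) := by
        rw [show (2:ℝ) = ((2:ℕ):ℝ) by norm_num, Real.rpow_natCast]; ring
      have hA : (-x) ^ (2:ℝ) = (-x) ^ (1-α) * (-x) ^ (α+1) := by
        rw [← Real.rpow_add hxpos, show (1-α+(α+1):ℝ) = 2 by ring]
      have hB : (-x) ^ (α+1) ≠ 0 := (Real.rpow_pos_of_pos hxpos _).ne'
      calc min (x^2) 1 * (Real.exp (α*x) / (Real.Gamma (-α) * (1 - Real.exp x) ^ (α+1)))
          ≤ x^2 * (1 / (Real.Gamma (-α) * ((-x) ^ (α+1) / 27))) :=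
            mul_le_mul (min_le_left _ _) hdiv (by positivity) (by positivity)
      _ = 27 / Real.Gamma (-α) * (-x) ^ (1-α) := by
            rw [hxsq, hA]
            field_simp
end

section
/- Let α ∈ (1,2) and x > 0. The series Σ_{n=0}^∞ (-1)^n (α+1)^{(n+1)/(α+1)-1} · x^{-(n+1)/(α+1)-1} / ( n! · Γ(1-(n+1)/(α+1)) · Γ(1-(n+2)/(α+1)) ) converges absolutely, i.e. Σ_{n=0}^∞ (α+1)^{(n+1)/(α+1)-1} · x^{-(n+1)/(α+1)-1} · |1/Γ(1-(n+1)/(α+1))| · |1/Γ(1-(n+2)/(α+1))| / n! < ∞. -/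
/-!
By Euler's reflection formula `|1 / Γ(1 - s)| = Γ(s) |sin πs| / π ≤ Γ(s) / π`, so with `A = α + 1`
and `L = (A / x) ^ (1 / A)` the `n`-th term is at most a constant times
`L ^ n Γ((n + 1) / A) Γ((n + 2) / A) / n!`. Log-convexity of `Γ` gives
`Γ(s + 2 / A) ≤ Γ(s) s ^ (2 / A)`, so consecutive terms of this majorant have ratio
`O(n ^ (2 / A - 1))`, which tends to `0` because `A > 2`.
-/

open Real Filter Topology
open scoped Nat

namespace Real

-- Also valid at the poles of `Γ(1 - s)`, where `1 / 0 = 0` and `sin (π * s) = 0`.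
theorem one_div_Gamma_one_sub {s : ℝ} (hs : Gamma s ≠ 0) :
    1 / Gamma (1 - s) = Gamma s * sin (π * s) / π := by
  have h : Gamma (1 - s) = π / (sin (π * s) * Gamma s) := by
    rw [← div_div, ← Gamma_mul_Gamma_one_sub s]
    field_simp
  rw [h, one_div_div]
  ring

theorem abs_one_div_Gamma_one_sub_le {s : ℝ} (hs : 0 < s) :
    |1 / Gamma (1 - s)| ≤ Gamma s / π := by
  have hΓ := Gamma_pos_of_pos hs
  rw [one_div_Gamma_one_sub hΓ.ne', abs_div, abs_mul, abs_of_pos hΓ, abs_of_pos pi_pos]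
  gcongr
  exact (mul_le_iff_le_one_right hΓ).2 (abs_sin_le_one _)

theorem Gamma_add_le_mul_rpow {s d : ℝ} (hs : 0 < s) (hd₀ : 0 < d) (hd₁ : d < 1) :
    Gamma (s + d) ≤ Gamma s * s ^ d := by
  have hΓ := Gamma_pos_of_pos hs
  calc Gamma (s + d) = Gamma ((1 - d) * s + d * (s + 1)) := by ring_nf
    _ ≤ Gamma s ^ (1 - d) * Gamma (s + 1) ^ d :=
      Gamma_mul_add_mul_le_rpow_Gamma_mul_rpow_Gamma hs (by positivity) (by linarith) hd₀
        (by ring)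
    _ = Gamma s * s ^ d := by
      rw [Gamma_add_one hs.ne', mul_rpow hs.le hΓ.le, mul_left_comm, ← rpow_add hΓ,
        sub_add_cancel, rpow_one, mul_comm]

end Real

theorem Gamma_add_three_div_le {A : ℝ} (hA : 2 < A) (n : ℕ) :
    Gamma ((n + 3) / A) ≤ Gamma ((n + 1) / A) * ((n : ℝ) + 1) ^ (2 / A) := by
  have hA₀ : 0 < A := by linarith
  have hs : 0 < ((n : ℝ) + 1) / A := by positivity
  calc Gamma ((n + 3) / A) = Gamma ((n + 1) / A + 2 / A) := by ring_nf
    _ ≤ Gamma ((n + 1) / A) * (((n : ℝ) + 1) / A) ^ (2 / A) :=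
      Gamma_add_le_mul_rpow hs (by positivity) ((div_lt_one hA₀).2 hA)
    _ ≤ Gamma ((n + 1) / A) * ((n : ℝ) + 1) ^ (2 / A) := by
      gcongr
      exact div_le_self (by positivity) (by linarith)

theorem summable_pow_mul_Gamma_mul_Gamma_div_factorial {A : ℝ} (hA : 2 < A) (K : ℝ) :
    Summable fun n : ℕ => K ^ n * (Gamma ((n + 1) / A) * Gamma ((n + 2) / A)) / n ! := by
  set f : ℕ → ℝ := fun n => K ^ n * (Gamma ((n + 1) / A) * Gamma ((n + 2) / A)) / n ! with hf
  have hA₀ : 0 < A := by linarith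
  have hnorm (n : ℕ) :
      ‖f n‖ = |K| ^ n * (Gamma ((n + 1) / A) * Gamma ((n + 2) / A)) / n ! := by
    have := Gamma_pos_of_pos (by positivity : 0 < ((n : ℝ) + 1) / A)
    have := Gamma_pos_of_pos (by positivity : 0 < ((n : ℝ) + 2) / A)
    rw [hf, norm_div, norm_mul, norm_pow, Real.norm_eq_abs, Real.norm_of_nonneg (by positivity),
      RCLike.norm_natCast]
  have hstep (n : ℕ) : ‖f (n + 1)‖ ≤ |K| * ((n : ℝ) + 1) ^ (2 / A - 1) * ‖f n‖ := by
    have e₁ : ((↑(n + 1) : ℝ) + 1) / A = (n + 2) / A := by push_cast; ring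
    have e₂ : ((↑(n + 1) : ℝ) + 2) / A = (n + 3) / A := by push_cast; ring
    rw [hnorm, hnorm, e₁, e₂, Nat.factorial_succ, Nat.cast_mul, rpow_sub_one (by positivity)]
    calc |K| ^ (n + 1) * (Gamma ((n + 2) / A) * Gamma ((n + 3) / A)) / (↑(n + 1) * n !)
        ≤ |K| ^ (n + 1) * (Gamma ((n + 2) / A) * (Gamma ((n + 1) / A) * ((n : ℝ) + 1) ^ (2 / A)))
          / (↑(n + 1) * n !) := by
          gcongr
          exact Gamma_add_three_div_le hA n
      _ = _ := by
          push_cast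
          field_simp
          ring
  have hlim : Tendsto (fun n : ℕ => |K| * ((n : ℝ) + 1) ^ (2 / A - 1)) atTop (𝓝 0) := by
    have hexp : 2 / A - 1 < 0 := by linarith [(div_lt_one hA₀).2 hA]
    simpa using ((tendsto_rpow_neg_atTop (neg_pos.2 hexp)).comp
      (tendsto_natCast_atTop_atTop.atTop_add tendsto_const_nhds)).const_mul |K|
  refine summable_of_ratio_norm_eventually_le (r := 1 / 2) (by norm_num) ?_
  filter_upwards [hlim.eventually_le_const (by norm_num : (0 : ℝ) < 1 / 2)] with n hn
  exact (hstep n).trans (mul_le_mul_of_nonneg_right hn (norm_nonneg _))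

theorem rpow_sub_one_mul_rpow_neg_sub_one {a x : ℝ} (ha : 0 < a) (hx : 0 < x) (s : ℝ) :
    a ^ (s - 1) * x ^ (-s - 1) = (a / x) ^ s / (a * x) := by
  rw [rpow_sub_one ha.ne', rpow_sub_one hx.ne', rpow_neg hx.le, div_rpow ha.le hx.le]
  field_simp

theorem series_absolute_convergence_general
    {α x : ℝ} (hα1 : 1 < α) (hx : 0 < x) :
    Summable (fun n : ℕ =>
      (α+1) ^ (((n:ℝ)+1)/(α+1) - 1) * x ^ (-(((n:ℝ)+1)/(α+1)) - 1) *
        |1 / Real.Gamma (1 - ((n:ℝ)+1)/(α+1))| * |1 / Real.Gamma (1 - ((n:ℝ)+2)/(α+1))| /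
        (n.factorial : ℝ)) := by
  have hA : 0 < α + 1 := by linarith
  set L := ((α + 1) / x) ^ (1 / (α + 1))
  have hmajorant :=
    (summable_pow_mul_Gamma_mul_Gamma_div_factorial (A := α + 1) (by linarith) L).mul_left
      (L / ((α + 1) * x * π ^ 2))
  refine hmajorant.of_nonneg_of_le (fun n => by positivity) (fun n => ?_)
  have hpow : (α + 1) ^ (((n : ℝ) + 1) / (α + 1) - 1) * x ^ (-(((n : ℝ) + 1) / (α + 1)) - 1) =
      L ^ (n + 1) / ((α + 1) * x) := by
    rw [rpow_sub_one_mul_rpow_neg_sub_one hA hx, ← rpow_natCast, ← rpow_mul (by positivity)]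
    push_cast
    ring_nf
  rw [hpow]
  calc _ ≤ L ^ (n + 1) / ((α + 1) * x) * (Gamma (((n : ℝ) + 1) / (α + 1)) / π) *
          (Gamma (((n : ℝ) + 2) / (α + 1)) / π) / n ! := by
        gcongr <;> exact abs_one_div_Gamma_one_sub_le (by positivity)
    _ = _ := by
        field_simp
        ring

/-- Absolute convergence of the series representation of the density of `𝒜_α`. -/
theorem series_absolute_convergence
    {α x : ℝ} (hα1 : 1 < α) (hα2 : α < 2) (hx : 0 < x) :
    Summable (fun n : ℕ =>
      (α+1) ^ (((n:ℝ)+1)/(α+1) - 1) * x ^ (-(((n:ℝ)+1)/(α+1)) - 1) *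
        |1 / Real.Gamma (1 - ((n:ℝ)+1)/(α+1))| * |1 / Real.Gamma (1 - ((n:ℝ)+2)/(α+1))| /
        (n.factorial : ℝ)) :=
  series_absolute_convergence_general hα1 hx
end

section
/- Let α ∈ (1,2). The function t ↦ | Γ(1-(α+1)it) / ( Γ(α/(α+1)-it) · Γ(1-it) ) | is integrable over ℝ, where Γ is the complex Gamma function. (This absolute integrability of the Mellin transform of 𝒜_α along the imaginary line justifies the Mellin inversion formula for its density.) -/
/-!
The reflection formula gives `|Γ(1 + iy)|² = πy / sinh(πy)`, which decays like `2π|y| e^{-π|y|}`.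
Comparing Euler's limit formulas factor by factor shows that `|Γ(σ + it)| / Γ(σ)` is
nondecreasing in `σ > 0`; applied to `σ = 1 ≤ 1 + a` together with
`Γ(1 + a + it) = (a + it) Γ(a + it)`, this bounds `|Γ(a + it)|` below by
`Γ(1 + a) |Γ(1 + it)| / |a + it|`. With `a = α/(α+1)` and `c = α + 1` the integrand is therefore
`O(|t| e^{-π(c-2)|t|/2})`, which is integrable because `c > 2`.
-/

open MeasureTheory Complex Real Filter Topology Finset
open scoped Nat ComplexConjugate

namespace Real

lemma sinh_le_exp_div_two (x : ℝ) : sinh x ≤ exp x / 2 := by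
  rw [sinh_eq]; linarith [exp_pos (-x)]

lemma exp_div_four_le_sinh {x : ℝ} (hx : 1 ≤ x) : exp x / 4 ≤ sinh x := by
  have h2 : 2 ≤ exp x := by linarith [add_one_le_exp x]
  have hinv : exp (-x) * exp x = 1 := by rw [← exp_add, neg_add_cancel, exp_zero]
  rw [sinh_eq]
  nlinarith [exp_pos (-x)]

lemma abs_div_sinh_abs (x : ℝ) : |x| / sinh |x| = x / sinh x := by
  rcases le_or_gt 0 x with h | h
  · rw [abs_of_nonneg h]
  · rw [abs_of_neg h, sinh_neg, neg_div_neg_eq]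

lemma mul_exp_neg_mul_le {b : ℝ} (hb : 0 < b) (x : ℝ) :
    x * exp (-(2 * b) * x) ≤ exp (-b * x) / b := by
  have hx : b * x ≤ exp (b * x) := by linarith [add_one_le_exp (b * x)]
  rw [le_div_iff₀ hb, show exp (-b * x) = exp (b * x) * exp (-(2 * b) * x) by
    rw [← exp_add]; ring_nf]
  nlinarith [exp_pos (-(2 * b) * x)]

end Real

namespace Complex

lemma norm_GammaSeq (s : ℂ) {n : ℕ} (hn : n ≠ 0) :
    ‖GammaSeq s n‖ = (n : ℝ) ^ s.re * n ! / ∏ j ∈ range (n + 1), ‖s + j‖ := by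
  rw [GammaSeq, norm_div, norm_mul, norm_prod, norm_natCast_cpow_of_pos (Nat.pos_of_ne_zero hn)]
  simp

lemma norm_add_mul_I_mul_le {x y : ℝ} (hx : 0 ≤ x) (hxy : x ≤ y) (t : ℝ) :
    ‖(y : ℂ) + t * I‖ * x ≤ ‖(x : ℂ) + t * I‖ * y := by
  refine (pow_le_pow_iff_left₀ (mul_nonneg (norm_nonneg _) hx)
    (mul_nonneg (norm_nonneg _) (hx.trans hxy)) two_ne_zero).mp ?_
  simp only [mul_pow, Complex.sq_norm, normSq_add_mul_I]
  nlinarith [mul_le_mul hxy hxy hx (hx.trans hxy), sq_nonneg t]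

lemma norm_GammaSeq_mul_norm_GammaSeq_le {σ τ : ℝ} (hσ : 0 < σ) (hστ : σ ≤ τ) (t : ℝ)
    {n : ℕ} (hn : n ≠ 0) :
    ‖GammaSeq (σ + t * I) n‖ * ‖GammaSeq τ n‖ ≤ ‖GammaSeq (τ + t * I) n‖ * ‖GammaSeq σ n‖ := by
  have hτ : 0 < τ := hσ.trans_le hστ
  set P : ℂ → ℝ := fun s => ∏ j ∈ range (n + 1), ‖s + j‖
  have shift : ∀ (r : ℝ) (j : ℕ), (r : ℂ) + t * I + j = ((r + j : ℝ) : ℂ) + t * I :=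
    fun r j => by push_cast; ring
  have key : P (τ + t * I) * P σ ≤ P (σ + t * I) * P τ := by
    simp only [P, ← prod_mul_distrib]
    refine prod_le_prod (fun j _ => by positivity) fun j _ => ?_
    rw [shift, shift, ← ofReal_natCast, ← ofReal_add, ← ofReal_add,
      Complex.norm_of_nonneg (by positivity), Complex.norm_of_nonneg (by positivity)]
    exact norm_add_mul_I_mul_le (by positivity) (by linarith) t
  have hP : ∀ s : ℂ, 0 < s.re → 0 < P s := fun s hs =>
    prod_pos fun j _ => norm_pos_iff.mpr <| ne_of_apply_ne re <| by
      simp only [add_re, natCast_re, zero_re, ne_eq]; positivity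
  rw [norm_GammaSeq _ hn, norm_GammaSeq _ hn, norm_GammaSeq _ hn, norm_GammaSeq _ hn]
  simp only [add_re, ofReal_re, mul_re, I_re, I_im, ofReal_im, mul_zero, mul_one, sub_self,
    add_zero, div_mul_div_comm]
  calc _ ≤ (n : ℝ) ^ σ * n ! * ((n : ℝ) ^ τ * n !) / (P (τ + t * I) * P σ) :=
        div_le_div_of_nonneg_left (by positivity)
          (mul_pos (hP _ (by simpa using hτ)) (hP _ (by simpa using hσ))) key
    _ = _ := by ring

theorem norm_Gamma_mul_norm_Gamma_le {σ τ : ℝ} (hσ : 0 < σ) (hστ : σ ≤ τ) (t : ℝ) :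
    ‖Gamma (σ + t * I)‖ * ‖Gamma τ‖ ≤ ‖Gamma (τ + t * I)‖ * ‖Gamma σ‖ := by
  have lim : ∀ s u : ℂ, Tendsto (fun n => ‖GammaSeq s n‖ * ‖GammaSeq u n‖) atTop
      (𝓝 (‖Gamma s‖ * ‖Gamma u‖)) := fun s u =>
    (GammaSeq_tendsto_Gamma s).norm.mul (GammaSeq_tendsto_Gamma u).norm
  exact le_of_tendsto_of_tendsto (lim _ _) (lim _ _) <|
    (eventually_ne_atTop 0).mono fun n hn => norm_GammaSeq_mul_norm_GammaSeq_le hσ hστ t hn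

theorem norm_Gamma_one_add_mul_I_mul_le {a : ℝ} (ha : 0 < a) (t : ℝ) :
    ‖Gamma (1 + t * I)‖ * ‖Gamma (a + 1)‖ ≤ ‖(a : ℂ) + t * I‖ * ‖Gamma (a + t * I)‖ := by
  have h := norm_Gamma_mul_norm_Gamma_le one_pos (by linarith : (1 : ℝ) ≤ a + 1) t
  have hne : (a : ℂ) + t * I ≠ 0 := ne_of_apply_ne re <| by simpa using ha.ne'
  rwa [ofReal_one, Gamma_one, norm_one, mul_one, ofReal_add, ofReal_one,
    add_right_comm, Gamma_add_one _ hne, norm_mul] at h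

theorem norm_Gamma_one_add_mul_I_sq {t : ℝ} (ht : t ≠ 0) :
    ‖Gamma (1 + t * I)‖ ^ 2 = π * t / Real.sinh (π * t) := by
  have hz : (t : ℂ) * I ≠ 0 := by simp [ht]
  have hsinh : (Real.sinh (π * t) : ℂ) ≠ 0 :=
    ofReal_ne_zero.mpr <| Real.sinh_ne_zero.mpr <| mul_ne_zero Real.pi_ne_zero ht
  have hconj : Gamma (1 - t * I) = conj (Gamma (1 + t * I)) := by
    rw [← Gamma_conj]; congr 1; simp [conj_ofReal, sub_eq_add_neg]
  have hsin : sin (π * (t * I)) = Real.sinh (π * t) * I := by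
    rw [← mul_assoc, sin_mul_I]; push_cast; rfl
  have hprod : Gamma (1 + t * I) * Gamma (1 - t * I) = ((π * t / Real.sinh (π * t) : ℝ) : ℂ) := by
    rw [add_comm, Gamma_add_one _ hz, mul_assoc, Gamma_mul_Gamma_one_sub, hsin]
    push_cast
    field_simp
  rw [hconj, mul_conj] at hprod
  rw [Complex.sq_norm]
  exact_mod_cast hprod

lemma le_norm_Gamma_one_add_mul_I_sq (t : ℝ) :
    2 * π * |t| * Real.exp (-(π * |t|)) ≤ ‖Gamma (1 + t * I)‖ ^ 2 := by
  rcases eq_or_ne t 0 with rfl | ht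
  · simp
  have hx : 0 < π * |t| := by positivity
  rw [norm_Gamma_one_add_mul_I_sq ht, ← Real.abs_div_sinh_abs, abs_mul, abs_of_pos Real.pi_pos]
  calc 2 * π * |t| * Real.exp (-(π * |t|)) = π * |t| / (Real.exp (π * |t|) / 2) := by
        rw [Real.exp_neg]; field_simp
    _ ≤ π * |t| / Real.sinh (π * |t|) :=
        div_le_div_of_nonneg_left hx.le (Real.sinh_pos_iff.mpr hx) (Real.sinh_le_exp_div_two _)

lemma norm_Gamma_one_add_mul_I_le {t : ℝ} (ht : 1 ≤ |t|) :
    ‖Gamma (1 + t * I)‖ ≤ 2 * π * |t| * Real.exp (-(π * |t|) / 2) := by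
  have hx : 1 ≤ π * |t| := by nlinarith [Real.pi_gt_three]
  have ht0 : t ≠ 0 := by rintro rfl; norm_num at ht
  refine (pow_le_pow_iff_left₀ (norm_nonneg _) (by positivity) two_ne_zero).mp ?_
  rw [norm_Gamma_one_add_mul_I_sq ht0, ← Real.abs_div_sinh_abs, abs_mul, abs_of_pos Real.pi_pos]
  calc π * |t| / Real.sinh (π * |t|) ≤ π * |t| / (Real.exp (π * |t|) / 4) :=
        div_le_div_of_nonneg_left (by positivity) (by positivity) (Real.exp_div_four_le_sinh hx)
    _ = 4 * (π * |t|) * Real.exp (-(π * |t|) / 2) ^ 2 := by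
        rw [← Real.exp_nat_mul, show ((2 : ℕ) : ℝ) * (-(π * |t|) / 2) = -(π * |t|) by ring,
          Real.exp_neg]
        field_simp
    _ ≤ (2 * π * |t| * Real.exp (-(π * |t|) / 2)) ^ 2 := by
        nlinarith [Real.exp_pos (-(π * |t|) / 2)]

lemma continuousOn_Gamma_re_pos : ContinuousOn Gamma {s | 0 < s.re} := fun s hs =>
  (continuousAt_Gamma s fun m h => by
    simp only [h, Set.mem_ofPred_eq, neg_re, natCast_re, Left.neg_pos_iff] at hs
    exact (Nat.cast_nonneg m).not_gt hs).continuousWithinAt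

lemma continuous_Gamma_add_mul_I {s : ℂ} (hs : 0 < s.re) {f : ℝ → ℝ} (hf : Continuous f) :
    Continuous fun t => Gamma (s + f t * I) :=
  continuousOn_Gamma_re_pos.comp_continuous (by fun_prop) fun t => by simpa using hs

theorem norm_Gamma_div_Gamma_mul_Gamma_le {a c t : ℝ} (ha : 0 < a) (ha1 : a ≤ 1) (hc : 2 < c)
    (ht : 1 ≤ |t|) :
    ‖Gamma (1 + (c * t : ℝ) * I) / (Gamma (a + t * I) * Gamma (1 + t * I))‖ ≤
      8 * c / (π * (c - 2) * ‖Gamma (a + 1)‖) * Real.exp (-(π * (c - 2) / 4) * |t|) := by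
  set T := |t|
  have hT : 0 < T := by linarith
  have hg : 0 < ‖Gamma (a + 1)‖ := norm_pos_iff.mpr <| Gamma_ne_zero_of_re_pos <| by
    simp only [add_re, ofReal_re, one_re]; linarith
  have hN := norm_Gamma_one_add_mul_I_le (t := c * t) (by
    rw [abs_mul, abs_of_pos (by linarith : 0 < c)]; nlinarith)
  rw [abs_mul, abs_of_pos (by linarith : 0 < c)] at hN
  have hE := le_norm_Gamma_one_add_mul_I_sq t
  have hD := norm_Gamma_one_add_mul_I_mul_le ha t
  have haT : ‖(a : ℂ) + t * I‖ ≤ 2 * T := (norm_add_le _ _).trans <| by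
    simp only [norm_real, norm_eq_abs, abs_of_pos ha, Complex.norm_mul, norm_I, mul_one, T]
    linarith
  have hDE : π * ‖Gamma (a + 1)‖ * Real.exp (-(π * T)) ≤
      ‖Gamma (a + t * I)‖ * ‖Gamma (1 + t * I)‖ := by
    refine le_of_mul_le_mul_left ?_ (by positivity : 0 < 2 * T)
    calc 2 * T * (π * ‖Gamma (a + 1)‖ * Real.exp (-(π * T)))
        = 2 * π * T * Real.exp (-(π * T)) * ‖Gamma (a + 1)‖ := by ring
      _ ≤ ‖Gamma (1 + t * I)‖ ^ 2 * ‖Gamma (a + 1)‖ := by gcongr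
      _ ≤ ‖Gamma (1 + t * I)‖ * (‖(a : ℂ) + t * I‖ * ‖Gamma (a + t * I)‖) := by
        rw [sq, mul_assoc]; gcongr
      _ ≤ ‖Gamma (1 + t * I)‖ * (2 * T * ‖Gamma (a + t * I)‖) := by gcongr
      _ = 2 * T * (‖Gamma (a + t * I)‖ * ‖Gamma (1 + t * I)‖) := by ring
  have hδ : 0 < π * (c - 2) / 4 := by have := Real.pi_pos; nlinarith
  rw [norm_div, norm_mul]
  calc _ ≤ 2 * π * (c * T) * Real.exp (-(π * (c * T)) / 2) /
        (π * ‖Gamma (a + 1)‖ * Real.exp (-(π * T))) :=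
        div_le_div₀ (by positivity) hN (by positivity) hDE
    _ = 2 * c / ‖Gamma (a + 1)‖ * (T * Real.exp (-(2 * (π * (c - 2) / 4)) * T)) := by
        rw [show -(π * (c * T)) / 2 = -(2 * (π * (c - 2) / 4)) * T + -(π * T) by ring,
          Real.exp_add]
        field_simp
    _ ≤ 2 * c / ‖Gamma (a + 1)‖ * (Real.exp (-(π * (c - 2) / 4) * T) / (π * (c - 2) / 4)) := by
        gcongr; exact Real.mul_exp_neg_mul_le hδ T
    _ = _ := by field_simp; ring

end Complex

open Set in
theorem integrable_of_norm_le_mul_exp_neg_abs {E : Type*} [NormedAddCommGroup E] {f : ℝ → E}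
    (hf : Continuous f) {C b R : ℝ} (hb : 0 < b)
    (h : ∀ t, R ≤ |t| → ‖f t‖ ≤ C * Real.exp (-b * |t|)) : Integrable f := by
  refine hf.locallyIntegrable.integrable_of_isBigO_atBot_atTop (g := fun t => Real.exp (b * t))
    (g' := fun t => Real.exp (-b * t)) ?_ ⟨Iic 0, Iic_mem_atBot 0, integrableOn_exp_mul_Iic hb 0⟩
    ?_ ⟨Ioi 0, Ioi_mem_atTop 0, exp_neg_integrableOn_Ioi 0 hb⟩
  · refine Asymptotics.IsBigO.of_bound C ?_
    filter_upwards [eventually_le_atBot (min (-R) 0)] with t ht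
    have ht0 : |t| = -t := abs_of_nonpos (ht.trans (min_le_right _ _))
    have := h t (by rw [ht0]; linarith [min_le_left (-R) 0])
    rwa [ht0, neg_mul_neg, ← Real.norm_of_nonneg (Real.exp_pos _).le] at this
  · refine Asymptotics.IsBigO.of_bound C ?_
    filter_upwards [eventually_ge_atTop (max R 0)] with t ht
    have ht0 : |t| = t := abs_of_nonneg ((le_max_right _ _).trans ht)
    have := h t (by rw [ht0]; exact (le_max_left _ _).trans ht)
    rwa [ht0, ← Real.norm_of_nonneg (Real.exp_pos _).le] at this

theorem mellin_transform_integrable_general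
    {α : ℝ} (hα1 : 1 < α) :
    Integrable (fun t : ℝ => ‖
      (Complex.Gamma (1 - ((α:ℂ)+1) * Complex.I * (t:ℂ)) /
        (Complex.Gamma ((α/(α+1) : ℝ) - Complex.I * (t:ℂ)) *
          Complex.Gamma (1 - Complex.I * (t:ℂ))))‖) volume := by
  set a := α / (α + 1)
  have ha : 0 < a := div_pos (by linarith) (by linarith)
  have ha1 : a ≤ 1 := (div_le_one (by linarith)).mpr (by linarith)
  have hc : 2 < α + 1 := by linarith
  have hG : Continuous fun t : ℝ =>
      Gamma (1 + ((α + 1) * t : ℝ) * I) / (Gamma (a + t * I) * Gamma (1 + t * I)) := by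
    refine (continuous_Gamma_add_mul_I (by simp) (by fun_prop)).div
      ((continuous_Gamma_add_mul_I (by simpa using ha) (by fun_prop)).mul
        (continuous_Gamma_add_mul_I (by simp) (by fun_prop))) fun t => ?_
    exact mul_ne_zero (Gamma_ne_zero_of_re_pos (by simpa using ha))
      (Gamma_ne_zero_of_re_pos (by simp))
  have hδ : 0 < π * (α + 1 - 2) / 4 := by have := Real.pi_pos; nlinarith
  refine ((integrable_of_norm_le_mul_exp_neg_abs hG hδ fun t ht =>
    norm_Gamma_div_Gamma_mul_Gamma_le ha ha1 hc ht).norm.comp_neg).congr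
    (Eventually.of_forall fun t => ?_)
  push_cast
  ring_nf

/-- Absolute integrability over ℝ of the Mellin transform of `𝒜_α` along the imaginary
line, justifying the Mellin inversion formula for its density. -/
theorem mellin_transform_integrable
    {α : ℝ} (hα1 : 1 < α) (hα2 : α < 2) :
    Integrable (fun t : ℝ => ‖
      (Complex.Gamma (1 - ((α:ℂ)+1) * Complex.I * (t:ℂ)) /
        (Complex.Gamma ((α/(α+1) : ℝ) - Complex.I * (t:ℂ)) *
          Complex.Gamma (1 - Complex.I * (t:ℂ))))‖) volume :=
  mellin_transform_integrable_general hα1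
end

section
/- For every x > 0, Γ(2/3) · Σ_{n=0}^∞ (-1)^n · 3^{(n+1)/3 - 1} · x^{-(n+1)/3 - 1} / ( n! · Γ(1-(n+1)/3) · Γ(1-(n+2)/3) ) = Γ(2/3) · x^{-4/3} · e^{-1/(9x)} / (2π · 3^{1/6}), i.e. g_2(x) = Γ(2/3) · x^{-4/3} · e^{-1/(9x)} / (2π · 3^{1/6}); in particular the terms with n not divisible by 3 vanish and the series reduces to x^{-4/3}/(3^{2/3} Γ(1/3)) · Σ_{p=0}^∞ (-1)^p (9x)^{-p} / p!. -/
/-- The series representation `g_α` of the density of `𝒜_α`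
(with `1/Γ` the reciprocal Gamma function, equal to `0` at poles of `Γ`). -/
noncomputable def seriesDensity (α x : ℝ) : ℝ :=
  Real.Gamma (α/(α+1)) * ∑' n : ℕ,
    (-1:ℝ)^n * (α+1) ^ (((n:ℝ)+1)/(α+1) - 1) * x ^ (-(((n:ℝ)+1)/(α+1)) - 1) /
      ((n.factorial : ℝ) * Real.Gamma (1 - ((n:ℝ)+1)/(α+1)) * Real.Gamma (1 - ((n:ℝ)+2)/(α+1)))

/-!
For `α = 2` and `3 ∤ n`, one of the two Gamma factors in the `n`-th denominator sits at the pole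
`-⌊n/3⌋`, so only the terms `n = 3p` survive. For those, the functional equation gives
`(3p)! Γ(1/3 - p) Γ(2/3 - p) = 27^p p! Γ(1/3) Γ(2/3)`, which turns the surviving terms into the
exponential series of `-1/(9x)`; the reflection formula `Γ(1/3) Γ(2/3) = 2π/√3` converts the
constant in front.
-/

open Real

namespace Real

theorem Gamma_one_third_mul_Gamma_two_thirds : Gamma (1/3) * Gamma (2/3) = 2 * π / √3 := by
  have h := Gamma_mul_Gamma_one_sub (1/3)
  rw [show (1:ℝ) - 1/3 = 2/3 by norm_num, show π * (1/3) = π/3 by ring, sin_pi_div_three] at h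
  rw [h]
  field_simp

theorem factorial_three_mul_mul_Gamma_one_third_sub_mul_Gamma_two_thirds_sub (p : ℕ) :
    ((3 * p).factorial : ℝ) * Gamma (1/3 - p) * Gamma (2/3 - p)
      = 27 ^ p * p.factorial * (Gamma (1/3) * Gamma (2/3)) := by
  induction p with
  | zero => simp
  | succ p ih =>
    have hp : (0:ℝ) ≤ p := p.cast_nonneg
    have h1 : Gamma (1/3 - p) = (1/3 - (p + 1)) * Gamma (1/3 - (p + 1)) := by
      rw [← Gamma_add_one (by linarith)]; ring_nf
    have h2 : Gamma (2/3 - p) = (2/3 - (p + 1)) * Gamma (2/3 - (p + 1)) := by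
      rw [← Gamma_add_one (by linarith)]; ring_nf
    rw [h1, h2] at ih
    rw [show 3 * (p + 1) = 3 * p + 1 + 1 + 1 by ring]
    push_cast [Nat.factorial_succ, pow_succ]
    linear_combination (27 * ((p:ℝ) + 1)) * ih

theorem tsum_neg_one_pow_mul_rpow_neg_div_factorial {y : ℝ} (hy : 0 ≤ y) :
    ∑' p : ℕ, (-1:ℝ) ^ p * y ^ (-(p:ℝ)) / p.factorial = exp (-1 / y) := by
  rw [exp_eq_exp_ℝ, NormedSpace.exp_eq_tsum_div]
  refine tsum_congr fun p => ?_
  rw [rpow_neg hy, rpow_natCast, div_pow]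
  ring

end Real

noncomputable def seriesDensityTerm (α x : ℝ) (n : ℕ) : ℝ :=
  (-1:ℝ)^n * (α+1) ^ (((n:ℝ)+1)/(α+1) - 1) * x ^ (-(((n:ℝ)+1)/(α+1)) - 1) /
    ((n.factorial : ℝ) * Real.Gamma (1 - ((n:ℝ)+1)/(α+1)) * Real.Gamma (1 - ((n:ℝ)+2)/(α+1)))

theorem seriesDensity_eq_tsum (α x : ℝ) :
    seriesDensity α x = Gamma (α/(α+1)) * ∑' n, seriesDensityTerm α x n := rfl

theorem seriesDensityTerm_two_eq_zero (x : ℝ) {n : ℕ} (hn : ¬ 3 ∣ n) :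
    seriesDensityTerm 2 x n = 0 := by
  obtain ⟨p, rfl | rfl⟩ : ∃ p, n = 3 * p + 1 ∨ n = 3 * p + 2 := ⟨n / 3, by omega⟩
  · have h : 1 - (((3 * p + 1 : ℕ) : ℝ) + 2) / (2 + 1) = -p := by push_cast; ring
    simp only [seriesDensityTerm, h, Gamma_neg_nat_eq_zero, mul_zero, div_zero]
  · have h : 1 - (((3 * p + 2 : ℕ) : ℝ) + 1) / (2 + 1) = -p := by push_cast; ring
    simp only [seriesDensityTerm, h, Gamma_neg_nat_eq_zero, mul_zero, zero_mul, div_zero]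

theorem seriesDensityTerm_two_three_mul {x : ℝ} (hx : 0 < x) (p : ℕ) :
    seriesDensityTerm 2 x (3 * p) = x ^ (-(4:ℝ)/3) / (3 ^ ((2:ℝ)/3) * (Gamma (1/3) * Gamma (2/3)))
      * ((-1:ℝ) ^ p * (9 * x) ^ (-(p:ℝ)) / p.factorial) := by
  have hsign : (-1:ℝ) ^ (3 * p) = (-1) ^ p := by rw [pow_mul]; norm_num
  have hthree : ((2:ℝ) + 1) ^ ((((3 * p : ℕ) : ℝ) + 1) / (2 + 1) - 1)
      = 3 ^ p / 3 ^ ((2:ℝ)/3) := by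
    rw [← rpow_natCast, ← rpow_sub (by norm_num)]; push_cast; ring_nf
  have hx_pow : x ^ (-((((3 * p : ℕ) : ℝ) + 1) / (2 + 1)) - 1) = x ^ (-(4:ℝ)/3) / x ^ p := by
    rw [← rpow_natCast, ← rpow_sub hx]; push_cast; ring_nf
  have hnine : (9 * x) ^ (-(p:ℝ)) = (9 ^ p * x ^ p)⁻¹ := by
    rw [rpow_neg (by positivity), rpow_natCast, mul_pow]
  have hGamma : ((3 * p).factorial : ℝ) * Gamma (1 - (((3 * p : ℕ) : ℝ) + 1) / (2 + 1))
      * Gamma (1 - (((3 * p : ℕ) : ℝ) + 2) / (2 + 1))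
      = 27 ^ p * p.factorial * (Gamma (1/3) * Gamma (2/3)) := by
    rw [← factorial_three_mul_mul_Gamma_one_third_sub_mul_Gamma_two_thirds_sub]
    push_cast; ring_nf
  have hG : Gamma (1/3) * Gamma (2/3) ≠ 0 := by
    rw [Gamma_one_third_mul_Gamma_two_thirds]; positivity
  have h27 : (27:ℝ) ^ p = 3 ^ p * 9 ^ p := by rw [← mul_pow]; norm_num
  rw [seriesDensityTerm, hsign, hthree, hx_pow, hGamma, hnine, h27]
  field_simp

theorem tsum_seriesDensityTerm_two (x : ℝ) :
    ∑' n, seriesDensityTerm 2 x n = ∑' p, seriesDensityTerm 2 x (3 * p) := by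
  refine ((mul_right_injective₀ three_ne_zero).tsum_eq fun n hn => ?_).symm
  by_contra hrange
  exact hn (seriesDensityTerm_two_eq_zero x fun ⟨p, hp⟩ => hrange ⟨p, hp.symm⟩)

theorem seriesDensity_two_eq_mul_tsum {x : ℝ} (hx : 0 < x) :
    seriesDensity 2 x = x ^ (-(4:ℝ)/3) / (3 ^ ((2:ℝ)/3) * Gamma (1/3)) *
      ∑' p : ℕ, (-1:ℝ) ^ p * (9 * x) ^ (-(p:ℝ)) / p.factorial := by
  have hG : Gamma (2/3) ≠ 0 := (Gamma_pos_of_pos (by norm_num)).ne'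
  rw [seriesDensity_eq_tsum, tsum_seriesDensityTerm_two,
    tsum_congr (seriesDensityTerm_two_three_mul hx), tsum_mul_left,
    show (2:ℝ) / (2 + 1) = 2 / 3 by norm_num]
  field_simp

/-- For `α = 2` the series representation of the density of `𝒜_2` sums to the closed
form `Γ(2/3) x^{-4/3} e^{-1/(9x)} / (2π 3^{1/6})`; in particular the terms with `n` not
divisible by `3` vanish and the series reduces to an exponential series. -/
theorem seriesDensity_two (x : ℝ) (hx : 0 < x) :
    seriesDensity 2 x =
      Real.Gamma (2/3) * x ^ (-(4:ℝ)/3) * Real.exp (-1/(9*x)) /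
        (2 * Real.pi * (3:ℝ) ^ ((1:ℝ)/6)) ∧
    seriesDensity 2 x =
      x ^ (-(4:ℝ)/3) / ((3:ℝ) ^ ((2:ℝ)/3) * Real.Gamma (1/3)) *
        ∑' p : ℕ, (-1:ℝ)^p * (9*x) ^ (-(p:ℝ)) / (p.factorial : ℝ) := by
  refine ⟨?_, seriesDensity_two_eq_mul_tsum hx⟩
  have hpow : (3:ℝ) ^ ((2:ℝ)/3) = 3 ^ ((1:ℝ)/6) * √3 := by
    rw [sqrt_eq_rpow, ← rpow_add (by norm_num)]; norm_num
  rw [seriesDensity_two_eq_mul_tsum hx, tsum_neg_one_pow_mul_rpow_neg_div_factorial (by positivity),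
    hpow]
  field_simp
  rw [mul_assoc, Gamma_one_third_mul_Gamma_two_thirds]
  field_simp
end

section
/- Let α ∈ (1,2). Then g_α(x) ~ (α+1)^{1/(α+1)-1} · x^{-1/(α+1)-1} / Γ((α-1)/(α+1)) as x → +∞, i.e. the ratio of g_α(x) to the right-hand side tends to 1 as x → +∞. (This is the first-order asymptotic behaviour at infinity of the density of 𝒜_α.) -/
/-!
Write `β = α + 1` and `y = x ^ (-1/β)`. Then `g_α(x) = Γ(α/β) β^(1/β-1) x^(-1/β-1) ∑ aₙ yⁿ`
with `a₀ = 1 / (Γ(α/β) Γ((α-1)/β))`, so the claim is that `∑ aₙ yⁿ → a₀` as `y → 0`, which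
follows by dominated convergence once `∑ |aₙ| < ∞`. Euler's reflection formula bounds
`|1/Γ(1-s)|` by `Γ(s)/π`, hence `|aₙ| ≤ β^(n/β) Γ((n+1)/β) Γ((n+2)/β) / (π² n!)`; for `β ≥ 2`
we have `Γ((n+3)/β) ≤ ((n+1)/β) Γ((n+1)/β)` for large `n`, so these majorants decay
geometrically with ratio `β^(1/β-1) < 1`.
-/

open Filter

open Real

namespace Real

theorem inv_Gamma_one_sub_eq {s : ℝ} (hs : Gamma s ≠ 0) :
    (Gamma (1 - s))⁻¹ = Gamma s * sin (π * s) / π := by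
  have hrefl := Gamma_mul_Gamma_one_sub s
  rcases eq_or_ne (sin (π * s)) 0 with hsin | hsin
  · rw [hsin, div_zero, mul_eq_zero, or_iff_right hs] at hrefl
    rw [hrefl, hsin, inv_zero, mul_zero, zero_div]
  · rw [eq_div_iff hsin] at hrefl
    have hΓ : Gamma (1 - s) ≠ 0 := by
      rintro h0
      rw [h0, mul_zero, zero_mul] at hrefl
      exact pi_ne_zero hrefl.symm
    generalize sin (π * s) = c at hrefl hsin ⊢
    field_simp
    linear_combination -hrefl

theorem abs_inv_Gamma_one_sub_le {s : ℝ} (hs : 0 < s) :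
    |(Gamma (1 - s))⁻¹| ≤ Gamma s / π := by
  have hΓ := Gamma_pos_of_pos hs
  rw [inv_Gamma_one_sub_eq hΓ.ne', abs_div, abs_mul, abs_of_pos hΓ, abs_of_pos pi_pos]
  gcongr
  exact mul_le_of_le_one_right hΓ.le (abs_sin_le_one _)

theorem Gamma_le_mul_Gamma {s t : ℝ} (hs : 0 < s) (ht : 2 ≤ t) (hts : t ≤ s + 1) :
    Gamma t ≤ s * Gamma s := by
  rw [← Gamma_add_one hs.ne']
  exact Gamma_strictMonoOn_Ici.monotoneOn ht (ht.trans hts) hts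

end Real

theorem tendsto_tsum_mul_pow_nhds_zero {c : ℕ → ℝ} (hc : Summable fun n => |c n|) :
    Tendsto (fun y : ℝ => ∑' n, c n * y ^ n) (nhds 0) (nhds (c 0)) := by
  have hlim : Tendsto (fun y : ℝ => ∑' n, c n * y ^ n) (nhds 0) (nhds (∑' n, c n * 0 ^ n)) := by
    refine tendsto_tsum_of_dominated_convergence hc (fun n => ?_) ?_
    · exact (continuous_const.mul (continuous_pow n)).tendsto' 0 _ rfl
    · filter_upwards [Metric.closedBall_mem_nhds (0 : ℝ) one_pos] with y hy n
      rw [mem_closedBall_zero_iff, norm_eq_abs] at hy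
      rw [norm_mul, norm_pow, norm_eq_abs, norm_eq_abs]
      exact mul_le_of_le_one_right (abs_nonneg _) (pow_le_one₀ (abs_nonneg _) hy)
  rwa [tsum_eq_single 0 fun n hn => by simp [hn], pow_zero, mul_one] at hlim

noncomputable def densityCoeff (β : ℝ) (n : ℕ) : ℝ :=
  (-1) ^ n * β ^ ((n : ℝ) / β) / n.factorial *
    (Gamma (1 - ((n : ℝ) + 1) / β))⁻¹ * (Gamma (1 - ((n : ℝ) + 2) / β))⁻¹

noncomputable def densityMajorant (β : ℝ) (n : ℕ) : ℝ :=
  β ^ ((n : ℝ) / β) / n.factorial *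
    (Gamma (((n : ℝ) + 1) / β) / π) * (Gamma (((n : ℝ) + 2) / β) / π)

section Coefficients

variable {β : ℝ}

theorem densityMajorant_nonneg (hβ : 0 < β) (n : ℕ) : 0 ≤ densityMajorant β n := by
  have := Gamma_pos_of_pos (show 0 < ((n : ℝ) + 1) / β by positivity)
  have := Gamma_pos_of_pos (show 0 < ((n : ℝ) + 2) / β by positivity)
  unfold densityMajorant
  positivity

theorem abs_densityCoeff_le (hβ : 0 < β) (n : ℕ) : |densityCoeff β n| ≤ densityMajorant β n := by
  unfold densityCoeff densityMajorant
  rw [abs_mul, abs_mul, abs_div, abs_mul, abs_pow, abs_neg, abs_one, one_pow, one_mul,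
    abs_of_pos (rpow_pos_of_pos hβ _), Nat.abs_cast]
  gcongr
  · exact abs_inv_Gamma_one_sub_le (by positivity)
  · exact abs_inv_Gamma_one_sub_le (by positivity)

theorem densityMajorant_succ_le (hβ : 2 ≤ β) {n : ℕ} (hn : 2 * β ≤ n) :
    densityMajorant β (n + 1) ≤ β ^ (1 / β - 1) * densityMajorant β n := by
  have hβ0 : 0 < β := by linarith
  have hs : 0 < ((n : ℝ) + 1) / β := by positivity
  have hΓ : Gamma (((n : ℝ) + 3) / β) ≤ ((n : ℝ) + 1) / β * Gamma (((n : ℝ) + 1) / β) := by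
    refine Gamma_le_mul_Gamma hs ?_ ?_
    · rw [le_div_iff₀ hβ0]; linarith
    · rw [div_add_one hβ0.ne', div_le_div_iff_of_pos_right hβ0]; linarith
  calc densityMajorant β (n + 1)
      = β ^ (((n : ℝ) + 1) / β) / ((n + 1) * n.factorial) *
          (Gamma (((n : ℝ) + 2) / β) / π) * (Gamma (((n : ℝ) + 3) / β) / π) := by
        unfold densityMajorant
        push_cast [Nat.factorial_succ]
        ring_nf
    _ ≤ β ^ (((n : ℝ) + 1) / β) / ((n + 1) * n.factorial) *
          (Gamma (((n : ℝ) + 2) / β) / π) *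
            (((n : ℝ) + 1) / β * Gamma (((n : ℝ) + 1) / β) / π) := by
        have := Gamma_pos_of_pos (show 0 < ((n : ℝ) + 2) / β by positivity)
        gcongr
    _ = β ^ (1 / β - 1) * densityMajorant β n := by
        unfold densityMajorant
        rw [rpow_sub hβ0, rpow_one, show ((n : ℝ) + 1) / β = n / β + 1 / β by ring,
          rpow_add hβ0]
        field_simp

theorem summable_densityMajorant (hβ : 2 ≤ β) : Summable (densityMajorant β) := by
  have hβ0 : 0 < β := by linarith
  refine summable_of_ratio_norm_eventually_le (r := β ^ (1 / β - 1))
    (rpow_lt_one_of_one_lt_of_neg (by linarith) ?_) ?_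
  · rw [sub_neg, div_lt_one hβ0]; linarith
  · filter_upwards [tendsto_natCast_atTop_atTop.eventually_ge_atTop (2 * β)] with n hn
    rw [norm_of_nonneg (densityMajorant_nonneg hβ0 _), norm_of_nonneg (densityMajorant_nonneg hβ0 _)]
    exact densityMajorant_succ_le hβ hn

theorem summable_abs_densityCoeff (hβ : 2 ≤ β) : Summable fun n => |densityCoeff β n| :=
  (summable_densityMajorant hβ).of_nonneg_of_le (fun _ => abs_nonneg _)
    (abs_densityCoeff_le (by linarith))

end Coefficients

theorem seriesDensity_eq_mul_tsum {α x : ℝ} (hα : 0 < α + 1) (hx : 0 < x) :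
    seriesDensity α x = Gamma (α / (α + 1)) * ((α + 1) ^ (1 / (α + 1) - 1) *
      x ^ (-(1 / (α + 1)) - 1)) * ∑' n : ℕ, densityCoeff (α + 1) n * (x ^ (-(1 / (α + 1)))) ^ n := by
  rw [seriesDensity, mul_assoc,
    ← tsum_mul_left (a := (α + 1) ^ (1 / (α + 1) - 1) * x ^ (-(1 / (α + 1)) - 1))]
  refine congrArg (Gamma (α / (α + 1)) * ·) (tsum_congr fun n => ?_)
  have hβ : (α + 1) ^ (((n : ℝ) + 1) / (α + 1) - 1) =
      (α + 1) ^ ((n : ℝ) / (α + 1)) * (α + 1) ^ (1 / (α + 1) - 1) := by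
    rw [← rpow_add hα]; ring_nf
  have hy : x ^ (-(((n : ℝ) + 1) / (α + 1)) - 1) =
      (x ^ (-(1 / (α + 1)))) ^ n * x ^ (-(1 / (α + 1)) - 1) := by
    rw [← rpow_natCast, ← rpow_mul hx.le, ← rpow_add hx]; ring_nf
  rw [densityCoeff, hβ, hy]
  ring

theorem density_asymptotics_at_infinity_general
    {α : ℝ} (hα1 : 1 < α) :
    Tendsto (fun x : ℝ => seriesDensity α x /
        ((α+1) ^ (1/(α+1) - 1) * x ^ (-(1/(α+1)) - 1) / Real.Gamma ((α-1)/(α+1))))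
      atTop (nhds 1) := by
  have hβ : 0 < α + 1 := by linarith
  have hΓ₁ : Gamma (α / (α + 1)) ≠ 0 := (Gamma_pos_of_pos (by positivity)).ne'
  have hΓ₂ : Gamma ((α - 1) / (α + 1)) ≠ 0 := (Gamma_pos_of_pos (div_pos (by linarith) hβ)).ne'
  have hseries := (tendsto_tsum_mul_pow_nhds_zero (summable_abs_densityCoeff (β := α + 1)
    (by linarith))).comp (tendsto_rpow_neg_atTop (one_div_pos.2 hβ))
  have hcoeff : Gamma (α / (α + 1)) * Gamma ((α - 1) / (α + 1)) * densityCoeff (α + 1) 0 = 1 := by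
    rw [densityCoeff, show 1 - ((0 : ℕ) + 1 : ℝ) / (α + 1) = α / (α + 1) by field_simp; ring,
      show 1 - ((0 : ℕ) + 2 : ℝ) / (α + 1) = (α - 1) / (α + 1) by field_simp; ring]
    simp only [Nat.cast_zero, pow_zero, zero_div, rpow_zero, Nat.factorial_zero, Nat.cast_one]
    field_simp
  have hlim := hseries.const_mul (Gamma (α / (α + 1)) * Gamma ((α - 1) / (α + 1)))
  rw [hcoeff] at hlim
  refine hlim.congr' ?_
  filter_upwards [eventually_gt_atTop 0] with x hx
  have hxpow : 0 < x ^ (-(1 / (α + 1)) - 1) := rpow_pos_of_pos hx _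
  have hβpow : 0 < (α + 1) ^ (1 / (α + 1) - 1) := rpow_pos_of_pos hβ _
  rw [seriesDensity_eq_mul_tsum hβ hx, Function.comp_apply]
  field_simp

/-- First-order asymptotics at infinity of the density of `𝒜_α`:
`g_α(x) ~ (α+1)^{1/(α+1)-1} x^{-1/(α+1)-1} / Γ((α-1)/(α+1))` as `x → +∞`. -/
theorem density_asymptotics_at_infinity
    {α : ℝ} (hα1 : 1 < α) (hα2 : α < 2) :
    Tendsto (fun x : ℝ => seriesDensity α x /
        ((α+1) ^ (1/(α+1) - 1) * x ^ (-(1/(α+1)) - 1) / Real.Gamma ((α-1)/(α+1))))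
      atTop (nhds 1) :=
  density_asymptotics_at_infinity_general hα1
end

section
/- Let α ∈ (1,2) and for each integer n ≥ 0 set m_n = (α+1)^{n/(1-α)} · Γ(α/(α+1)) · Γ(1 + (α+1)n/(α-1)) / ( Γ(α/(α+1) + n/(α-1)) · Γ(1 + n/(α-1)) ). Then (m_n)^{1/n} / n → (α+1)^{α/(α-1)} / ( e·(α-1) ) as n → ∞. (These m_n are the positive integer moments of 𝒳_α = 𝒜_α^{1/(1-α)}; the limit, via the Davies–Kasahara theorem, gives the exponential decay rate of P[𝒳_α > x].) -/
/-!
Taking logarithms, everything reduces to the crude Stirling estimate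
`log Γ(x) = x log x - x + O(log x)`, obtained from Stirling's bounds on `log n!` and the
monotonicity of `Γ` on `[2, ∞)`. At `x = a + b n` it gives
`log Γ(a + b n) / n - b log n → b log b - b`. The three Gamma factors of `m_n` have slopes
`β = (α+1)/(α-1)`, `γ` and `γ` with `γ = 1/(α-1)`; since `β - 2γ = 1` the `log n` terms
leave exactly the `n log n` that the division by `n` removes, and the constants add up to the
logarithm of the limit.
-/

open Filter Real Topology Asymptotics
open scoped Nat

lemma mul_log_sub_self_sub_le {x y : ℝ} (hy : 0 < y) (hyx : y ≤ x) :
    x * log x - x - (y * log y - y) ≤ (x - y) * log x := by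
  have h := log_le_sub_one_of_pos (div_pos (hy.trans_le hyx) hy)
  rw [log_div (by linarith) hy.ne'] at h
  have : y * (log x - log y) ≤ x - y := by
    calc y * (log x - log y) ≤ y * (x / y - 1) := by gcongr
      _ = x - y := by field_simp
  nlinarith

lemma mul_log_sub_self_mono {x y : ℝ} (hy : 1 ≤ y) (hyx : y ≤ x) :
    y * log y - y ≤ x * log x - x := by
  have h := log_le_sub_one_of_pos (div_pos (by linarith : 0 < y) (by linarith : 0 < x))
  rw [log_div (by linarith) (by linarith)] at h
  have : x * (log y - log x) ≤ y - x := by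
    calc x * (log y - log x) ≤ x * (y / x - 1) := by gcongr; linarith
      _ = y - x := by field_simp [(by linarith : x ≠ 0)]
  nlinarith [log_nonneg hy]

lemma log_factorial_le {n : ℕ} (hn : n ≠ 0) :
    log n ! ≤ n * log n - n + log n / 2 + 1 := by
  have hmono : Stirling.stirlingSeq n ≤ Stirling.stirlingSeq 1 := by
    obtain ⟨m, rfl⟩ := Nat.exists_eq_succ_of_ne_zero hn
    exact Stirling.stirlingSeq'_antitone (Nat.zero_le m)
  rw [Stirling.stirlingSeq_one, Stirling.stirlingSeq, div_le_iff₀ (by positivity)] at hmono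
  have hn0 : (0:ℝ) < n := by positivity
  calc log n ! ≤ log (exp 1 / √2 * (√(2 * n) * (n / exp 1) ^ n)) :=
        log_le_log (by positivity) hmono
    _ = n * log n - n + log n / 2 + 1 := by
      rw [log_mul (by positivity) (by positivity), log_mul (by positivity) (by positivity),
        log_div (by positivity) (by positivity), log_pow, log_div hn0.ne' (by positivity),
        log_sqrt (by positivity), log_sqrt (by positivity), log_mul two_ne_zero hn0.ne', log_exp]
      ring

lemma log_le_log_factorial (n : ℕ) : n * log n - n ≤ log n ! := by
  rcases eq_or_ne n 0 with rfl | hn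
  · simp
  have := Stirling.le_log_factorial_stirling hn
  have : 0 ≤ log n := log_natCast_nonneg n
  have : 0 ≤ log (2 * π) := log_nonneg (by linarith [pi_gt_three])
  linarith

lemma abs_log_Gamma_sub_le {x : ℝ} (hx : 2 ≤ x) :
    |log (Gamma x) - (x * log x - x)| ≤ 2 * log x + 1 := by
  set n := ⌊x⌋₊
  have hn2 : 2 ≤ n := Nat.le_floor (by exact_mod_cast hx)
  have hn2' : (2:ℝ) ≤ n := by exact_mod_cast hn2
  have hnx : (n:ℝ) ≤ x := Nat.floor_le (by linarith)
  have hxn : x < n + 1 := Nat.lt_floor_add_one x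
  have hlogn : log n ≤ log x := log_le_log (by linarith) hnx
  have hlogn0 : 0 ≤ log n := log_natCast_nonneg n
  have hG := Gamma_strictMonoOn_Ici.monotoneOn
  have hupper : Gamma x ≤ n ! := by
    rw [← Gamma_nat_eq_factorial]
    exact hG (by simpa using hx) (by simp; linarith) hxn.le
  have hlower : (n - 1 : ℕ)! ≤ Gamma x := by
    rw [← Gamma_nat_eq_factorial, Nat.cast_sub (by omega), Nat.cast_one, sub_add_cancel]
    exact hG (by simpa using hn2') (by simpa using hx) hnx
  have hfact : log n ! = log n + log (n - 1 : ℕ)! := by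
    rw [← log_mul (by positivity) (by positivity), ← Nat.cast_mul,
      Nat.mul_factorial_pred (by omega)]
  have h1 := log_le_log (by positivity) hupper
  have h2 := log_le_log (by positivity) hlower
  have h3 := log_factorial_le (n := n) (by omega)
  have h4 := log_le_log_factorial n
  have h5 := mul_log_sub_self_sub_le (by linarith) hnx
  have h6 := mul_log_sub_self_mono (by linarith) hnx
  have h7 : (x - n) * log x ≤ log x := by
    nlinarith [log_nonneg (by linarith : (1:ℝ) ≤ x)]
  rw [abs_le]
  constructor <;> linarith

lemma isBigO_log_Gamma_sub :
    (fun x => log (Gamma x) - (x * log x - x)) =O[atTop] fun x => 2 * log x + 1 := by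
  refine IsBigO.of_bound 1 ?_
  filter_upwards [eventually_ge_atTop 2] with x hx
  rw [one_mul, norm_eq_abs, norm_of_nonneg (by linarith [log_nonneg (by linarith : (1:ℝ) ≤ x)])]
  exact abs_log_Gamma_sub_le hx

lemma tendsto_log_Gamma_affine_div_sub (a : ℝ) {b : ℝ} (hb : 0 < b) :
    Tendsto (fun t => log (Gamma (a + b * t)) / t - b * log t) atTop
      (𝓝 (b * log b - b)) := by
  have hx : Tendsto (fun t => a + b * t) atTop atTop :=
    tendsto_atTop_add_const_left _ _ (tendsto_id.const_mul_atTop hb)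
  have hxt : Tendsto (fun t => (a + b * t) / t) atTop (𝓝 b) := by
    have := (tendsto_inv_atTop_zero.const_mul a).const_add b
    rw [mul_zero, add_zero] at this
    refine this.congr' ?_
    filter_upwards [eventually_gt_atTop 0] with t ht
    field_simp
    ring
  have herr : Tendsto (fun t => (log (Gamma (a + b * t)) - ((a + b * t) * log (a + b * t)
      - (a + b * t))) / t) atTop (𝓝 0) := by
    refine IsLittleO.tendsto_div_nhds_zero ?_
    refine (isBigO_log_Gamma_sub.comp_tendsto hx).trans_isLittleO ?_
    have hlog : (fun x => 2 * log x + 1) =o[atTop] id :=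
      (isLittleO_log_id_atTop.const_mul_left 2).add (isLittleO_const_id_atTop 1)
    refine (hlog.comp_tendsto hx).trans_isBigO (isBigO_of_div_tendsto_nhds ?_ b hxt)
    filter_upwards [eventually_ne_atTop 0] with t ht h
    exact absurd h ht
  have hmain : Tendsto (fun t => ((a + b * t) / t) * log ((a + b * t) / t) - (a + b * t) / t
      + a * (log t / t)) atTop (𝓝 (b * log b - b)) := by
    have := ((hxt.mul (hxt.log hb.ne')).sub hxt).add
      (isLittleO_log_id_atTop.tendsto_div_nhds_zero.const_mul a)
    simpa using this
  rw [← zero_add (b * log b - b)]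
  refine (herr.add hmain).congr' ?_
  filter_upwards [eventually_gt_atTop 0, hx.eventually_gt_atTop 0] with t ht hxt
  rw [log_div hxt.ne' ht.ne']
  field_simp
  ring

lemma tendsto_rpow_one_div_div_self {u : ℕ → ℝ} {L : ℝ} (hL : 0 < L) (hu : ∀ n, 0 < u n)
    (h : Tendsto (fun n : ℕ => log (u n) / n - log n) atTop (𝓝 (log L))) :
    Tendsto (fun n : ℕ => u n ^ ((1:ℝ) / n) / n) atTop (𝓝 L) := by
  rw [← exp_log hL]
  refine ((continuous_exp.tendsto _).comp h).congr' ?_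
  filter_upwards [eventually_gt_atTop 0] with n hn
  rw [Function.comp_apply, exp_sub, exp_log (by positivity), rpow_def_of_pos (hu n), mul_one_div]

theorem moments_growth_rate_general
    {α : ℝ} (hα1 : 1 < α) :
    Tendsto (fun n : ℕ =>
        ((α+1) ^ ((n:ℝ)/(1-α)) * Real.Gamma (α/(α+1)) *
            Real.Gamma (1 + (α+1)*(n:ℝ)/(α-1)) /
          (Real.Gamma (α/(α+1) + (n:ℝ)/(α-1)) * Real.Gamma (1 + (n:ℝ)/(α-1)))) ^ ((1:ℝ)/(n:ℝ))
          / (n:ℝ))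
      atTop (nhds ((α+1) ^ (α/(α-1)) / (Real.exp 1 * (α-1)))) := by
  have hα : 0 < α - 1 := sub_pos.2 hα1
  set γ := (α - 1)⁻¹ with hγ
  set β := (α + 1) / (α - 1) with hβ
  set c := α / (α + 1)
  have hβγ : β = 2 * γ + 1 := by rw [hβ, hγ]; field_simp; ring
  have hΓ (a : ℝ) {b : ℝ} (hb : 0 < b) :=
    (tendsto_log_Gamma_affine_div_sub a hb).comp tendsto_natCast_atTop_atTop
  have hlim := ((((tendsto_const_div_atTop_nhds_zero_nat (log (Gamma c))).const_add
    (log (α + 1) / (1 - α))).add (hΓ 1 (by positivity : 0 < β))).sub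
    (hΓ c (by positivity : 0 < γ))).sub (hΓ 1 (by positivity : 0 < γ))
  have hV : log ((α + 1) ^ (α / (α - 1)) / (exp 1 * (α - 1))) = log (α + 1) / (1 - α) + 0
      + (β * log β - β) - (γ * log γ - γ) - (γ * log γ - γ) := by
    rw [log_div (by positivity) (by positivity), log_rpow (by positivity),
      log_mul (exp_pos 1).ne' hα.ne', log_exp, hβ, hγ, log_div (by positivity) hα.ne', log_inv]
    field_simp [(by linarith : 1 - α ≠ 0)]
    ring
  refine tendsto_rpow_one_div_div_self (by positivity) (fun n => by positivity) ?_
  rw [hV]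
  refine hlim.congr' ?_
  filter_upwards [eventually_ne_atTop 0] with n hn
  rw [Function.comp_apply, Function.comp_apply, Function.comp_apply,
    log_div (by positivity) (by positivity), log_mul (by positivity) (by positivity),
    log_mul (by positivity) (by positivity), log_mul (by positivity) (by positivity),
    log_rpow (by positivity), mul_div_right_comm, ← hβ, div_eq_inv_mul (n : ℝ) (α - 1), ← hγ,
    hβγ]
  field_simp [(by linarith : 1 - α ≠ 0)]
  ring

/-- The positive integer moments `m_n` of `𝒳_α = 𝒜_α^{1/(1-α)}` satisfy
`m_n^{1/n}/n → (α+1)^{α/(α-1)} / (e(α-1))` as `n → ∞`. -/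
theorem moments_growth_rate
    {α : ℝ} (hα1 : 1 < α) (hα2 : α < 2) :
    Tendsto (fun n : ℕ =>
        ((α+1) ^ ((n:ℝ)/(1-α)) * Real.Gamma (α/(α+1)) *
            Real.Gamma (1 + (α+1)*(n:ℝ)/(α-1)) /
          (Real.Gamma (α/(α+1) + (n:ℝ)/(α-1)) * Real.Gamma (1 + (n:ℝ)/(α-1)))) ^ ((1:ℝ)/(n:ℝ))
          / (n:ℝ))
      atTop (nhds ((α+1) ^ (α/(α-1)) / (Real.exp 1 * (α-1)))) :=
  moments_growth_rate_general hα1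
end

section
/- Let α ∈ (1,2) and for each integer n ≥ 0 set a_n = (α+1)^{n/(1-α)} · Γ(α/(α+1)) · Γ(1 + (α+1)n/(α-1)) / ( n! · Γ(α/(α+1) + n/(α-1)) · Γ(1 + n/(α-1)) ). Then a_n ~ ( Γ(α/(α+1)) · √(α²-1) / ( 2π · (α-1)^{1/(α+1)} ) ) · c_α^{-n} · n^{-α/(α+1)} as n → ∞, where c_α = (α-1)(α+1)^{α/(1-α)}; i.e. the ratio of a_n to the right-hand side tends to 1. (These a_n are the Taylor coefficients of the moment generating function of 𝒳_α = 𝒜_α^{1/(1-α)}.) -/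
open Filter

/-- The Taylor coefficients `a_n` of the moment generating function of
`𝒳_α = 𝒜_α^{1/(1-α)}`. -/
noncomputable def mgfCoef (α : ℝ) (n : ℕ) : ℝ :=
  (α+1) ^ ((n:ℝ)/(1-α)) * Real.Gamma (α/(α+1)) * Real.Gamma (1 + (α+1)*(n:ℝ)/(α-1)) /
    ((n.factorial : ℝ) * Real.Gamma (α/(α+1) + (n:ℝ)/(α-1)) * Real.Gamma (1 + (n:ℝ)/(α-1)))

/-!
Stirling's formula extends from `n!` to `Γ(y + 1)` for real `y → ∞`: with `m = ⌊y⌋` and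
`θ = y - m`, Wendel's inequalities (log-convexity of `Γ`) pin `Γ(y + 1)` between
`m! (m + 1)^θ (m + 1)/(m + 2)` and `m! (m + 1)^θ`, and `√(2πy) (y/e)^y` interpolates in the
same way. Together with `Γ(y + a) ~ Γ(y) y^a` this replaces each Gamma factor of `a_n` by its
Stirling approximation. Since `(α + 1)/(α - 1) = 1 + 2/(α - 1)`, the factors `(y/e)^y` cancel
exactly, and what is left is the stated profile `c_α^{-n} n^{-α/(α+1)}` with its constant.
-/

open Real Topology Asymptotics

namespace Real

lemma log_Gamma_add_one {x : ℝ} (hx : 0 < x) : log (Gamma (x + 1)) = log (Gamma x) + log x := by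
  rw [Gamma_add_one hx.ne', log_mul hx.ne' (Gamma_pos_of_pos hx).ne', add_comm]

lemma Gamma_add_le_Gamma_mul_rpow {x a : ℝ} (hx : 0 < x) (ha : 0 ≤ a) (ha1 : a ≤ 1) :
    Gamma (x + a) ≤ Gamma x * x ^ a := by
  have hconv := convexOn_log_Gamma.2 (Set.mem_Ioi.2 hx) (Set.mem_Ioi.2 (by linarith : 0 < x + 1))
    (sub_nonneg.2 ha1) ha (by ring)
  simp only [Function.comp_apply, smul_eq_mul, log_Gamma_add_one hx,
    show (1 - a) * x + a * (x + 1) = x + a by ring] at hconv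
  rw [← log_le_log_iff (Gamma_pos_of_pos (by linarith)) (by positivity),
    log_mul (by positivity) (by positivity), log_rpow hx]
  linarith

lemma Gamma_mul_rpow_mul_le_Gamma_add_mul {x a : ℝ} (hx : 0 < x) (ha : 0 ≤ a) (ha1 : a ≤ 1) :
    Gamma x * x ^ a * x ≤ Gamma (x + a) * (x + a) := by
  have hxa : 0 < x + a := by linarith
  have hconv := convexOn_log_Gamma.2 (Set.mem_Ioi.2 hxa)
    (Set.mem_Ioi.2 (by linarith : 0 < x + a + 1)) ha (sub_nonneg.2 ha1) (by ring)
  simp only [Function.comp_apply, smul_eq_mul, log_Gamma_add_one hxa,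
    show a * (x + a) + (1 - a) * (x + a + 1) = x + 1 by ring, log_Gamma_add_one hx] at hconv
  have hlog : a * log x ≤ a * log (x + a) := by gcongr; linarith
  rw [← log_le_log_iff (by positivity) (by positivity)]
  simp (disch := positivity) only [log_mul, log_rpow]
  nlinarith

lemma tendsto_div_add_const_atTop (a : ℝ) :
    Tendsto (fun x : ℝ ↦ x / (x + a)) atTop (𝓝 1) := by
  have h := (tendsto_const_nhds (x := a)).div_atTop
    (tendsto_atTop_add_const_right atTop a tendsto_id)
  have h' : Tendsto (fun x ↦ 1 - a / (x + a)) atTop (𝓝 1) := by simpa using h.const_sub 1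
  refine h'.congr' ?_
  filter_upwards [eventually_gt_atTop (-a)] with x hx
  have : x + a ≠ 0 := by linarith
  field_simp
  ring

lemma tendsto_add_one_div_self_atTop : Tendsto (fun x : ℝ ↦ (x + 1) / x) atTop (𝓝 1) := by
  simpa using (tendsto_div_add_const_atTop 1).inv₀ one_ne_zero

lemma Gamma_add_isEquivalent {a : ℝ} (ha : 0 ≤ a) (ha1 : a ≤ 1) :
    (fun x ↦ Gamma (x + a)) ~[atTop] fun x ↦ Gamma x * x ^ a := by
  refine isEquivalent_of_tendsto_one <| tendsto_of_tendsto_of_tendsto_of_le_of_le'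
    (tendsto_div_add_const_atTop a) tendsto_const_nhds ?_ ?_
  all_goals filter_upwards [eventually_gt_atTop 0] with x hx
  all_goals have hpos : 0 < Gamma x * x ^ a := by positivity
  · rw [Pi.div_apply, div_le_div_iff₀ (by linarith) hpos]
    simpa [mul_comm] using Gamma_mul_rpow_mul_le_Gamma_add_mul hx ha ha1
  · exact (div_le_one hpos).2 (Gamma_add_le_Gamma_mul_rpow hx ha ha1)

noncomputable def stirlingApprox (y : ℝ) : ℝ := √(2 * π * y) * (y / exp 1) ^ y

lemma stirlingApprox_pos {y : ℝ} (hy : 0 < y) : 0 < stirlingApprox y := by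
  unfold stirlingApprox; positivity

lemma div_exp_one_rpow_self {y : ℝ} (hy : 0 < y) : (y / exp 1) ^ y = exp (y * (log y - 1)) := by
  rw [rpow_def_of_pos (by positivity), log_div hy.ne' (exp_pos 1).ne', log_exp, mul_comm]

lemma log_stirlingApprox {y : ℝ} (hy : 0 < y) :
    log (stirlingApprox y) = (log (2 * π) + log y) / 2 + y * (log y - 1) := by
  rw [stirlingApprox, div_exp_one_rpow_self hy, log_mul (by positivity) (exp_pos _).ne', log_exp,
    log_sqrt (by positivity), log_mul (by positivity) hy.ne']

lemma div_exp_one_rpow_self_mul_rpow_le {x θ : ℝ} (hx : 0 < x) (hθ : 0 ≤ θ) :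
    (x / exp 1) ^ x * x ^ θ ≤ ((x + θ) / exp 1) ^ (x + θ) := by
  have hxθ : 0 < x + θ := by linarith
  rw [div_exp_one_rpow_self hx, div_exp_one_rpow_self hxθ, rpow_def_of_pos hx, ← exp_add]
  refine exp_le_exp.2 ?_
  have h := one_sub_inv_le_log_of_pos (div_pos hxθ hx)
  rw [inv_div, log_div hxθ.ne' hx.ne', show 1 - x / (x + θ) = θ / (x + θ) by field_simp; ring,
    div_le_iff₀ hxθ] at h
  nlinarith

lemma add_div_exp_one_rpow_self_le {x θ : ℝ} (hx : 0 < x) (hθ : 0 ≤ θ) :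
    ((x + θ) / exp 1) ^ (x + θ) ≤ (x / exp 1) ^ x * (x + θ) ^ θ := by
  have hxθ : 0 < x + θ := by linarith
  rw [div_exp_one_rpow_self hx, div_exp_one_rpow_self hxθ, rpow_def_of_pos hxθ, ← exp_add]
  refine exp_le_exp.2 ?_
  have h := log_le_sub_one_of_pos (div_pos hxθ hx)
  rw [log_div hxθ.ne' hx.ne', show (x + θ) / x - 1 = θ / x by field_simp; ring,
    le_div_iff₀ hx] at h
  nlinarith

lemma stirlingApprox_mul_rpow_le {x θ : ℝ} (hx : 0 < x) (hθ : 0 ≤ θ) :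
    stirlingApprox x * x ^ θ ≤ stirlingApprox (x + θ) := by
  rw [stirlingApprox, stirlingApprox, mul_assoc]
  gcongr
  · nlinarith [pi_pos]
  · exact div_exp_one_rpow_self_mul_rpow_le hx hθ

lemma stirlingApprox_add_le {x θ : ℝ} (hx : 0 < x) (hθ : 0 ≤ θ) (hθ1 : θ ≤ 1) :
    stirlingApprox (x + θ) ≤ stirlingApprox x * √((x + 1) / x) * (x + 1) ^ θ := by
  have hsqrt : √(2 * π * (x + θ)) ≤ √(2 * π * x) * √((x + 1) / x) := by
    rw [← sqrt_mul (by positivity), show 2 * π * x * ((x + 1) / x) = 2 * π * (x + 1) by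
      field_simp]
    gcongr
  calc stirlingApprox (x + θ)
      ≤ √(2 * π * x) * √((x + 1) / x) * ((x / exp 1) ^ x * (x + θ) ^ θ) :=
        mul_le_mul hsqrt (add_div_exp_one_rpow_self_le hx hθ) (by positivity) (by positivity)
    _ ≤ √(2 * π * x) * √((x + 1) / x) * ((x / exp 1) ^ x * (x + 1) ^ θ) := by gcongr
    _ = stirlingApprox x * √((x + 1) / x) * (x + 1) ^ θ := by rw [stirlingApprox]; ring

lemma Gamma_add_add_one_div_stirlingApprox_le {x θ : ℝ} (hx : 0 < x) (hθ : 0 ≤ θ)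
    (hθ1 : θ ≤ 1) :
    Gamma (x + θ + 1) / stirlingApprox (x + θ) ≤
      Gamma (x + 1) / stirlingApprox x * ((x + 1) / x) := by
  have hS := stirlingApprox_pos hx
  calc Gamma (x + θ + 1) / stirlingApprox (x + θ)
      ≤ Gamma (x + 1) * (x + 1) ^ θ / (stirlingApprox x * x ^ θ) := by
        rw [add_right_comm]
        exact div_le_div₀ (by positivity) (Gamma_add_le_Gamma_mul_rpow (by linarith) hθ hθ1)
          (by positivity) (stirlingApprox_mul_rpow_le hx hθ)
    _ = Gamma (x + 1) / stirlingApprox x * ((x + 1) / x) ^ θ := by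
        rw [div_rpow (by linarith) hx.le]; field_simp
    _ ≤ Gamma (x + 1) / stirlingApprox x * ((x + 1) / x) := by
        gcongr
        exact rpow_le_self_of_one_le ((one_le_div hx).2 (by linarith)) hθ1

lemma Gamma_add_one_div_stirlingApprox_mul_le {x θ : ℝ} (hx : 0 < x) (hθ : 0 ≤ θ)
    (hθ1 : θ ≤ 1) :
    Gamma (x + 1) / stirlingApprox x * ((x + 1) / (x + 2) / √((x + 1) / x)) ≤
      Gamma (x + θ + 1) / stirlingApprox (x + θ) := by
  have hS := stirlingApprox_pos hx
  have hGamma : Gamma (x + 1) * (x + 1) ^ θ * ((x + 1) / (x + 2)) ≤ Gamma (x + θ + 1) := by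
    have h := Gamma_mul_rpow_mul_le_Gamma_add_mul (by linarith : 0 < x + 1) hθ hθ1
    rw [add_right_comm] at h
    calc Gamma (x + 1) * (x + 1) ^ θ * ((x + 1) / (x + 2))
        ≤ Gamma (x + 1) * (x + 1) ^ θ * ((x + 1) / (x + θ + 1)) := by
          gcongr ?_ * ((x + 1) / ?_)
          linarith
      _ ≤ Gamma (x + θ + 1) := by
        rw [← mul_div_assoc, div_le_iff₀ (by linarith)]; exact h
  calc Gamma (x + 1) / stirlingApprox x * ((x + 1) / (x + 2) / √((x + 1) / x))
      = Gamma (x + 1) * (x + 1) ^ θ * ((x + 1) / (x + 2)) /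
          (stirlingApprox x * √((x + 1) / x) * (x + 1) ^ θ) := by
        have : 0 < (x + 1) ^ θ := by positivity
        have : 0 < √((x + 1) / x) := by positivity
        field_simp
    _ ≤ Gamma (x + θ + 1) / stirlingApprox (x + θ) :=
        div_le_div₀ (by positivity) hGamma (stirlingApprox_pos (by linarith))
          (stirlingApprox_add_le hx hθ hθ1)

lemma tendsto_Gamma_natCast_add_one_div_stirlingApprox :
    Tendsto (fun n : ℕ ↦ Gamma (n + 1) / stirlingApprox n) atTop (𝓝 1) := by
  have h := Stirling.factorial_isEquivalent_stirling
  rw [isEquivalent_iff_tendsto_one ((eventually_gt_atTop 0).mono fun n hn ↦ ?_)] at h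
  · refine h.congr fun n ↦ ?_
    simp [Gamma_nat_eq_factorial, stirlingApprox, mul_right_comm]
  · have : (0 : ℝ) < n := by exact_mod_cast hn
    positivity

lemma Gamma_add_one_isEquivalent_stirlingApprox :
    (fun y ↦ Gamma (y + 1)) ~[atTop] stirlingApprox := by
  refine isEquivalent_of_tendsto_one ?_
  have hfloor : Tendsto (fun y : ℝ ↦ (⌊y⌋₊ : ℝ)) atTop atTop :=
    tendsto_natCast_atTop_atTop.comp (tendsto_nat_floor_atTop (α := ℝ))
  have hs :=
    tendsto_Gamma_natCast_add_one_div_stirlingApprox.comp (tendsto_nat_floor_atTop (α := ℝ))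
  have hU := tendsto_add_one_div_self_atTop
  have hL : Tendsto (fun x : ℝ ↦ (x + 1) / (x + 2) / √((x + 1) / x)) atTop (𝓝 1) := by
    have h :=
      (tendsto_div_add_const_atTop 1).comp (tendsto_atTop_add_const_right atTop 1 tendsto_id)
    convert h.div hU.sqrt (by simp) using 2 with x
    · simp only [Function.comp_apply, id, Pi.div_apply]
      ring_nf
    · simp
  refine tendsto_of_tendsto_of_tendsto_of_le_of_le' (by simpa using hs.mul (hL.comp hfloor))
    (by simpa using hs.mul (hU.comp hfloor)) ?_ ?_
  all_goals filter_upwards [eventually_ge_atTop 1] with y hy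
  all_goals
    have hm : (0 : ℝ) < ⌊y⌋₊ := by exact_mod_cast Nat.floor_pos.2 hy
    have hθ0 : 0 ≤ y - ⌊y⌋₊ := sub_nonneg.2 (Nat.floor_le (by linarith))
    have hθ1 : y - ⌊y⌋₊ ≤ 1 := by linarith [Nat.lt_floor_add_one y]
    have hy' : y = ⌊y⌋₊ + (y - ⌊y⌋₊) := by ring
  · simpa [← hy'] using Gamma_add_one_div_stirlingApprox_mul_le hm hθ0 hθ1
  · simpa [← hy'] using Gamma_add_add_one_div_stirlingApprox_le hm hθ0 hθ1

lemma Gamma_add_isEquivalent_stirlingApprox {a : ℝ} (ha : 0 ≤ a) (ha1 : a ≤ 1) :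
    (fun y ↦ Gamma (y + a)) ~[atTop] fun y ↦ stirlingApprox y * y ^ (a - 1) := by
  refine (Gamma_add_isEquivalent ha ha1).trans_eventuallyEq
    ((eventually_gt_atTop 0).mono fun y hy ↦ ?_) |>.trans
    (Gamma_add_one_isEquivalent_stirlingApprox.mul IsEquivalent.refl)
  simp only [Pi.mul_apply, Gamma_add_one hy.ne', rpow_sub hy, rpow_one]
  field_simp

lemma stirlingApprox_one_add_two_mul_div {b t : ℝ} (hb : 0 < b) (ht : 0 < t) :
    stirlingApprox ((1 + 2 * b) * t) / (stirlingApprox t * stirlingApprox (b * t) ^ 2) =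
      √(1 + 2 * b) / (2 * π * (b * t)) * ((1 + 2 * b) ^ (1 + 2 * b) / b ^ (2 * b)) ^ t := by
  have hb' : 0 < 1 + 2 * b := by linarith
  have hS := stirlingApprox_pos ht
  have hSb := stirlingApprox_pos (mul_pos hb ht)
  have hSb' := stirlingApprox_pos (mul_pos hb' ht)
  refine log_injOn_pos (Set.mem_Ioi.2 (by positivity)) (Set.mem_Ioi.2 (by positivity)) ?_
  simp (disch := positivity) only [log_mul, log_div, log_rpow, log_sqrt, log_pow,
    log_stirlingApprox]
  push_cast
  ring

end Real

lemma stirlingApprox_mgfCoef_eq {α t : ℝ} (hα : 1 < α) (ht : 0 < t) :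
    (α + 1) ^ (t / (1 - α)) * stirlingApprox ((α + 1) * t / (α - 1)) /
      (stirlingApprox t * stirlingApprox (t / (α - 1)) ^ 2 *
        (t / (α - 1)) ^ (α / (α + 1) - 1)) =
    √(α ^ 2 - 1) / (2 * π * (α - 1) ^ ((1 : ℝ) / (α + 1))) *
      ((α - 1) * (α + 1) ^ (α / (1 - α))) ^ (-t) * t ^ (-α / (α + 1)) := by
  have ha : 0 < α - 1 := by linarith
  have h1α : 1 - α ≠ 0 := by linarith
  have hb : 0 < 1 / (α - 1) := by positivity
  rw [show (α + 1) * t / (α - 1) = (1 + 2 * (1 / (α - 1))) * t by field_simp; ring,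
    show t / (α - 1) = 1 / (α - 1) * t by ring, mul_div_assoc, ← div_div, ← mul_div_assoc,
    stirlingApprox_one_add_two_mul_div hb ht,
    show 1 + 2 * (1 / (α - 1)) = (α + 1) / (α - 1) by field_simp; ring,
    show α ^ 2 - 1 = (α - 1) * (α + 1) by ring]
  refine log_injOn_pos (Set.mem_Ioi.2 (by positivity)) (Set.mem_Ioi.2 (by positivity)) ?_
  simp (disch := positivity) only [log_mul, log_div, log_rpow, log_sqrt, log_one]
  field_simp
  ring

theorem mgf_coefficients_asymptotics_general
    {α : ℝ} (hα1 : 1 < α) :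
    Tendsto (fun n : ℕ => mgfCoef α n /
        (Real.Gamma (α/(α+1)) * Real.sqrt (α^2-1) /
            (2 * Real.pi * (α-1) ^ ((1:ℝ)/(α+1))) *
          ((α-1)*(α+1)^(α/(1-α))) ^ (-(n:ℝ)) * (n:ℝ) ^ (-α/(α+1))))
      atTop (nhds 1) := by
  have ha : 0 < α - 1 := by linarith
  have hc1 : α / (α + 1) ≤ 1 := (div_le_one (by linarith)).2 (by linarith)
  have hn : Tendsto (fun n : ℕ ↦ (n : ℝ)) atTop atTop := tendsto_natCast_atTop_atTop
  have hu : Tendsto (fun n : ℕ ↦ (n : ℝ) / (α - 1)) atTop atTop := hn.atTop_div_const ha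
  have hk : Tendsto (fun n : ℕ ↦ (α + 1) * n / (α - 1)) atTop atTop :=
    (hn.const_mul_atTop (by linarith)).atTop_div_const ha
  have hStirling := Gamma_add_one_isEquivalent_stirlingApprox
  have hshift := (Gamma_add_isEquivalent_stirlingApprox (by positivity) hc1).comp_tendsto hu
  have hmodel := ((IsEquivalent.refl (u := fun n : ℕ ↦
      (α + 1) ^ ((n : ℝ) / (1 - α)) * Gamma (α / (α + 1)))).mul
    (hStirling.comp_tendsto hk)).div
    (((hStirling.comp_tendsto hn).mul hshift).mul (hStirling.comp_tendsto hu))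
  refine (isEquivalent_iff_tendsto_one ?_).mp ((hmodel.congr_left ?_).congr_right ?_)
  · filter_upwards [eventually_gt_atTop 0] with n hn0
    have : 0 < √(α ^ 2 - 1) := sqrt_pos.2 (by nlinarith)
    have : (0 : ℝ) < n := by exact_mod_cast hn0
    positivity
  · refine Eventually.of_forall fun n ↦ ?_
    simp only [Pi.mul_apply, Pi.div_apply, Function.comp_apply, mgfCoef, Gamma_nat_eq_factorial]
    ring_nf
  · filter_upwards [eventually_gt_atTop 0] with n hn0
    simp only [Pi.mul_apply, Pi.div_apply, Function.comp_apply]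
    linear_combination Gamma (α / (α + 1)) *
      stirlingApprox_mgfCoef_eq hα1 (Nat.cast_pos.2 hn0 : (0 : ℝ) < n)

/-- Asymptotics of the Taylor coefficients of the moment generating function of `𝒳_α`:
`a_n ~ (Γ(α/(α+1)) √(α²-1) / (2π (α-1)^{1/(α+1)})) c_α^{-n} n^{-α/(α+1)}` where
`c_α = (α-1)(α+1)^{α/(1-α)}`. -/
theorem mgf_coefficients_asymptotics
    {α : ℝ} (hα1 : 1 < α) (hα2 : α < 2) :
    Tendsto (fun n : ℕ => mgfCoef α n /
        (Real.Gamma (α/(α+1)) * Real.sqrt (α^2-1) /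
            (2 * Real.pi * (α-1) ^ ((1:ℝ)/(α+1))) *
          ((α-1)*(α+1)^(α/(1-α))) ^ (-(n:ℝ)) * (n:ℝ) ^ (-α/(α+1))))
      atTop (nhds 1) :=
  mgf_coefficients_asymptotics_general hα1
end
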